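/- arXiv:1703.09426 — 6 statements merged into one kernel-verified Lean document; each statement's English description precedes it below -/
import Mathlib

section
/- Let H be a real Hilbert space and, for i in a finite index set I = {1,…,m}, let U_i : H → H be ρ_i-strongly quasi-nonexpansive with ρ_i > 0 and ⋂_{i∈I} Fix U_i ≠ ∅. Let ω_i > 0 with Σ_{i∈I} ω_i = 1 and U := Σ_{i∈I} ω_i U_i. Then: (1) U is ρ-strongly quasi-nonexpansive with ρ := min_{i∈I} ρ_i > 0, and Fix U = ⋂_{i∈I} Fix U_i; (2) ‖U x − z‖² ≤ ‖x − z‖² − Σ_{i∈I} ω_i ρ_i ‖U_i x − x‖² for every x ∈ H and every z ∈ ⋂_{i∈I} Fix U_i; (3) for every x ∈ H, z ∈ ⋂_{i∈I} Fix U_i, and every positive R with R ≥ ‖x − z‖, one has (1/(2R)) Σ_{i∈I} ω_i ρ_i ‖U_i x − x‖² ≤ ‖U x − x‖. -/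
open Function

lemma jensen_norm_sq' {H : Type*} [SeminormedAddCommGroup H] [NormedSpace ℝ H]
    {m : ℕ} (ω : Fin m → ℝ) (v : Fin m → H)
    (h0 : ∀ i, 0 ≤ ω i) (h1 : ∑ i, ω i = 1) :
    ‖∑ i, ω i • v i‖ ^ 2 ≤ ∑ i, ω i * ‖v i‖ ^ 2 := by
  have A : ‖∑ i, ω i • v i‖ ≤ ∑ i, ω i * ‖v i‖ := by
    refine (norm_sum_le _ _).trans_eq ?_
    refine Finset.sum_congr rfl fun i _ => ?_
    rw [norm_smul, Real.norm_of_nonneg (h0 i)]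
  have B : (∑ i, ω i * ‖v i‖) ^ 2 ≤ ∑ i, ω i * ‖v i‖ ^ 2 := by
    have := (Even.convexOn_pow (even_two)).map_sum_le (t := Finset.univ)
      (w := ω) (p := fun i => ‖v i‖) (fun i _ => h0 i) h1 (fun i _ => Set.mem_univ _)
    simpa [smul_eq_mul] using this
  calc ‖∑ i, ω i • v i‖ ^ 2 ≤ (∑ i, ω i * ‖v i‖) ^ 2 := by
        apply pow_le_pow_left₀ (norm_nonneg _) A
    _ ≤ _ := B

/-- A convex combination `U = Σ ω_i U_i` of `ρ_i`-strongly
quasi-nonexpansive operators with a common fixed point is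
`(min_i ρ_i)`-strongly quasi-nonexpansive, `Fix U = ⋂ Fix U_i`, and the two
quantitative inequalities hold. -/
theorem convex_combination_sqne
    {H : Type*} [NormedAddCommGroup H] [InnerProductSpace ℝ H] [CompleteSpace H]
    {m : ℕ} [NeZero m] (U : Fin m → H → H) (ρ : Fin m → ℝ) (hρ : ∀ i, 0 < ρ i)
    (hfix : ∀ i, (fixedPoints (U i)).Nonempty)
    (hsqne : ∀ i, ∀ x : H, ∀ z ∈ fixedPoints (U i),
      ‖U i x - z‖ ^ 2 ≤ ‖x - z‖ ^ 2 - ρ i * ‖U i x - x‖ ^ 2)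
    (hC : (⋂ i, fixedPoints (U i)).Nonempty)
    (ω : Fin m → ℝ) (hω : ∀ i, 0 < ω i) (hωsum : ∑ i, ω i = 1) :
    (fixedPoints (fun x => ∑ i, ω i • U i x) = ⋂ i, fixedPoints (U i)) ∧
    (∀ x : H, ∀ z ∈ fixedPoints (fun x => ∑ i, ω i • U i x),
      ‖(∑ i, ω i • U i x) - z‖ ^ 2 ≤
        ‖x - z‖ ^ 2 - (⨅ i, ρ i) * ‖(∑ i, ω i • U i x) - x‖ ^ 2) ∧
    (∀ x : H, ∀ z ∈ ⋂ i, fixedPoints (U i),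
      ‖(∑ i, ω i • U i x) - z‖ ^ 2 ≤
        ‖x - z‖ ^ 2 - ∑ i, ω i * ρ i * ‖U i x - x‖ ^ 2) ∧
    (∀ x : H, ∀ z ∈ ⋂ i, fixedPoints (U i), ∀ R : ℝ, 0 < R → ‖x - z‖ ≤ R →
      1 / (2 * R) * ∑ i, ω i * ρ i * ‖U i x - x‖ ^ 2 ≤ ‖(∑ i, ω i • U i x) - x‖) := by
  have hωnn : ∀ i, 0 ≤ ω i := fun i => (hω i).le
  obtain ⟨z₀, hz₀⟩ := hC
  have hz₀' : ∀ i, U i z₀ = z₀ := by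
    intro i
    have := Set.mem_iInter.mp hz₀ i
    exact this
  -- rewriting lemma
  have hsub : ∀ (x y : H), (∑ i, ω i • U i x) - y = ∑ i, ω i • (U i x - y) := by
    intro x y
    simp only [smul_sub, Finset.sum_sub_distrib, ← Finset.sum_smul, hωsum, one_smul]
  -- key inequality (part 3)
  have key3 : ∀ (x z : H), (∀ i, U i z = z) →
      ‖(∑ i, ω i • U i x) - z‖ ^ 2 ≤ ‖x - z‖ ^ 2 - ∑ i, ω i * ρ i * ‖U i x - x‖ ^ 2 := by
    intro x z hz
    calc ‖(∑ i, ω i • U i x) - z‖ ^ 2 = ‖∑ i, ω i • (U i x - z)‖ ^ 2 := by rw [hsub]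
      _ ≤ ∑ i, ω i * ‖U i x - z‖ ^ 2 := jensen_norm_sq' ω _ hωnn hωsum
      _ ≤ ∑ i, ω i * (‖x - z‖ ^ 2 - ρ i * ‖U i x - x‖ ^ 2) := by
          refine Finset.sum_le_sum fun i _ => ?_
          exact mul_le_mul_of_nonneg_left (hsqne i x z (hz i)) (hωnn i)
      _ = ‖x - z‖ ^ 2 - ∑ i, ω i * ρ i * ‖U i x - x‖ ^ 2 := by
          simp only [mul_sub, Finset.sum_sub_distrib, ← Finset.sum_mul, hωsum, one_mul,
            mul_assoc]
  have hterm_nonneg : ∀ (x : H) i, 0 ≤ ω i * ρ i * ‖U i x - x‖ ^ 2 := fun x i =>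
    mul_nonneg (mul_nonneg (hωnn i) (hρ i).le) (sq_nonneg _)
  -- fixed point set equality
  have hfixeq : fixedPoints (fun x => ∑ i, ω i • U i x) = ⋂ i, fixedPoints (U i) := by
    ext x
    simp only [Set.mem_iInter, fixedPoints, Set.mem_setOf_eq, IsFixedPt]
    constructor
    · intro hx
      have h := key3 x z₀ hz₀'
      rw [hx] at h
      have hsum0 : ∑ i, ω i * ρ i * ‖U i x - x‖ ^ 2 = 0 := by
        have := Finset.sum_nonneg (fun i (_ : i ∈ Finset.univ) => hterm_nonneg x i)
        linarith
      intro i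
      have h0 := (Finset.sum_eq_zero_iff_of_nonneg
        (fun i (_ : i ∈ Finset.univ) => hterm_nonneg x i)).mp hsum0 i (Finset.mem_univ i)
      have hpos : 0 < ω i * ρ i := mul_pos (hω i) (hρ i)
      have : ‖U i x - x‖ ^ 2 = 0 := by
        rcases mul_eq_zero.mp h0 with h | h
        · exact absurd h hpos.ne'
        · exact h
      have hn : ‖U i x - x‖ = 0 := by nlinarith [norm_nonneg (U i x - x)]
      exact sub_eq_zero.mp (norm_eq_zero.mp hn)
    · intro hx
      simp only [hx, ← Finset.sum_smul, hωsum, one_smul]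
  refine ⟨hfixeq, ?_, fun x z hz => key3 x z (fun i => Set.mem_iInter.mp hz i), ?_⟩
  · -- part 2
    intro x z hz
    rw [hfixeq] at hz
    have hz' : ∀ i, U i z = z := fun i => Set.mem_iInter.mp hz i
    have h3 := key3 x z hz'
    have hinf_nonneg : 0 ≤ ⨅ i, ρ i := le_ciInf fun i => (hρ i).le
    have hinf_le : ∀ i, (⨅ j, ρ j) ≤ ρ i := fun i =>
      ciInf_le (Set.Finite.bddBelow (Set.finite_range ρ)) i
    have hjen : ‖(∑ i, ω i • U i x) - x‖ ^ 2 ≤ ∑ i, ω i * ‖U i x - x‖ ^ 2 := by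
      rw [hsub]
      exact jensen_norm_sq' ω _ hωnn hωsum
    have hstep : (⨅ i, ρ i) * ‖(∑ i, ω i • U i x) - x‖ ^ 2 ≤
        ∑ i, ω i * ρ i * ‖U i x - x‖ ^ 2 := by
      calc (⨅ i, ρ i) * ‖(∑ i, ω i • U i x) - x‖ ^ 2
          ≤ (⨅ i, ρ i) * ∑ i, ω i * ‖U i x - x‖ ^ 2 :=
            mul_le_mul_of_nonneg_left hjen hinf_nonneg
        _ = ∑ i, ω i * (⨅ j, ρ j) * ‖U i x - x‖ ^ 2 := by
            rw [Finset.mul_sum]; exact Finset.sum_congr rfl fun i _ => by ring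
        _ ≤ ∑ i, ω i * ρ i * ‖U i x - x‖ ^ 2 := by
            refine Finset.sum_le_sum fun i _ => ?_
            have : ω i * (⨅ j, ρ j) ≤ ω i * ρ i :=
              mul_le_mul_of_nonneg_left (hinf_le i) (hωnn i)
            exact mul_le_mul_of_nonneg_right this (by positivity)
    linarith
  · -- part 4
    intro x z hz R hR hxz
    have hz' : ∀ i, U i z = z := fun i => Set.mem_iInter.mp hz i
    have h3 := key3 x z hz'
    have hS : 0 ≤ ∑ i, ω i * ρ i * ‖U i x - x‖ ^ 2 :=
      Finset.sum_nonneg fun i _ => hterm_nonneg x i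
    have hTz : ‖(∑ i, ω i • U i x) - z‖ ≤ ‖x - z‖ := by
      have h1 : ‖(∑ i, ω i • U i x) - z‖ ^ 2 ≤ ‖x - z‖ ^ 2 := by linarith
      nlinarith [norm_nonneg ((∑ i, ω i • U i x) - z), norm_nonneg (x - z)]
    have hdiff : ‖x - z‖ - ‖(∑ i, ω i • U i x) - z‖ ≤ ‖(∑ i, ω i • U i x) - x‖ := by
      have := norm_sub_norm_le (x - z) ((∑ i, ω i • U i x) - z)
      have heq : (x - z) - ((∑ i, ω i • U i x) - z) = x - ∑ i, ω i • U i x := by abel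
      rw [heq] at this
      calc ‖x - z‖ - ‖(∑ i, ω i • U i x) - z‖ ≤ ‖x - ∑ i, ω i • U i x‖ := this
        _ = ‖(∑ i, ω i • U i x) - x‖ := by rw [norm_sub_rev]
    rw [div_mul_eq_mul_div, one_mul, div_le_iff₀ (by positivity)]
    nlinarith [norm_nonneg ((∑ i, ω i • U i x) - z), norm_nonneg ((∑ i, ω i • U i x) - x),
      norm_nonneg (x - z)]
end

section
/- Let f_i : ℝⁿ → ℝ be convex for each i in a finite index set I = {1,…,m}, let g(x) := max_{i∈I} f_i(x), and assume the Slater condition holds, i.e., g(z) < 0 for some z ∈ ℝⁿ. Then for every compact subset K ⊆ ℝⁿ there is a constant δ_K > 0 such that δ_K · d(x, S(g,0)) ≤ g₊(x) for every x ∈ K. -/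
open Metric

/-! If `g` is convex and `g z < 0`, then for `g x > 0` the point of the segment `[x, z]` at
parameter `g x / (g x - g z)` lies in `S(g,0)`, so
`d(x, S(g,0)) ≤ g x / (g x - g z) * ‖x - z‖ ≤ g₊(x) * ‖x - z‖ / (-g z)`.
On a compact `K` the distance `‖x - z‖` is bounded, which gives `δ_K`. -/

theorem ConvexOn.finset_sup' {𝕜 E β ι : Type*} [Semiring 𝕜] [PartialOrder 𝕜] [AddCommMonoid E]
    [AddCommMonoid β] [LinearOrder β] [IsOrderedAddMonoid β] [SMul 𝕜 E] [Module 𝕜 β]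
    [PosSMulStrictMono 𝕜 β] {s : Set E} {t : Finset ι} (ht : t.Nonempty) {f : ι → E → β}
    (hf : ∀ i ∈ t, ConvexOn 𝕜 s (f i)) :
    ConvexOn 𝕜 s fun x => t.sup' ht fun i => f i x := by
  convert Finset.sup'_induction ht f (fun _ h₁ _ h₂ => h₁.sup h₂) hf using 1
  ext x
  rw [Finset.sup'_apply]

section

variable {E : Type*} [NormedAddCommGroup E] [NormedSpace ℝ E] {g : E → ℝ}

theorem ConvexOn.infDist_sublevel_le (hg : ConvexOn ℝ Set.univ g) {x z : E} (hz : g z < 0)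
    (hx : 0 < g x) : infDist x {y | g y ≤ 0} ≤ g x / (g x - g z) * dist x z := by
  have hgap : 0 < g x - g z := by linarith
  set θ := g x / (g x - g z)
  have hθ₀ : 0 ≤ θ := div_nonneg hx.le hgap.le
  have hθ₁ : θ ≤ 1 := (div_le_one hgap).2 (by linarith)
  have hθ : θ * (g x - g z) = g x := div_mul_cancel₀ _ hgap.ne'
  have hy : g (AffineMap.lineMap x z θ) ≤ 0 := calc
    g (AffineMap.lineMap x z θ) ≤ (1 - θ) * g x + θ * g z := by
      rw [AffineMap.lineMap_apply_module]
      exact hg.2 trivial trivial (by linarith) hθ₀ (by ring)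
    _ = 0 := by linear_combination -hθ
  calc infDist x {y | g y ≤ 0} ≤ dist x (AffineMap.lineMap x z θ) := infDist_le_dist_of_mem hy
    _ = θ * dist x z := by rw [dist_left_lineMap, Real.norm_of_nonneg hθ₀]

theorem ConvexOn.neg_mul_infDist_sublevel_le (hg : ConvexOn ℝ Set.univ g) {z : E} (hz : g z < 0)
    (x : E) : -g z * infDist x {y | g y ≤ 0} ≤ max 0 (g x) * dist x z := by
  rcases le_or_gt (g x) 0 with hx | hx
  · rw [infDist_zero_of_mem (show x ∈ {y | g y ≤ 0} from hx), mul_zero]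
    positivity
  · have hgap : 0 < g x - g z := by linarith
    rw [max_eq_right hx.le]
    calc -g z * infDist x {y | g y ≤ 0}
        ≤ (g x - g z) * infDist x {y | g y ≤ 0} := by gcongr; exacts [infDist_nonneg, by linarith]
      _ ≤ (g x - g z) * (g x / (g x - g z) * dist x z) := by
        gcongr
        exact hg.infDist_sublevel_le hz hx
      _ = g x * dist x z := by field_simp [hgap.ne']

end

/-- Fukushima's lemma: If `f_i : ℝⁿ → ℝ` are convex,
`g = max_i f_i` and the Slater condition `g(z) < 0` holds for some `z`, then for
every compact `K` there is `δ_K > 0` with `δ_K d(x, S(g,0)) ≤ g₊(x)` on `K`. -/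
theorem fukushima_lemma
    {n m : ℕ} [NeZero m] (f : Fin m → EuclideanSpace ℝ (Fin n) → ℝ)
    (hconv : ∀ i, ConvexOn ℝ Set.univ (f i))
    (hSlater : ∃ z : EuclideanSpace ℝ (Fin n),
      (Finset.univ.sup' Finset.univ_nonempty fun i => f i z) < 0) :
    ∀ K : Set (EuclideanSpace ℝ (Fin n)), IsCompact K →
      ∃ δ : ℝ, 0 < δ ∧ ∀ x ∈ K,
        δ * infDist x {y : EuclideanSpace ℝ (Fin n) |
            (Finset.univ.sup' Finset.univ_nonempty fun i => f i y) ≤ 0} ≤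
          max 0 (Finset.univ.sup' Finset.univ_nonempty fun i => f i x) := by
  obtain ⟨z, hz⟩ := hSlater
  intro K hK
  have hg := ConvexOn.finset_sup' Finset.univ_nonempty fun i _ => hconv i
  obtain ⟨R, hR⟩ := hK.isBounded.subset_closedBall z
  have hC : 0 < max R 1 := lt_max_of_lt_right one_pos
  refine ⟨-(Finset.univ.sup' Finset.univ_nonempty fun i => f i z) / max R 1,
    div_pos (neg_pos.2 hz) hC, fun x hx => ?_⟩
  have hxz : dist x z ≤ max R 1 := (mem_closedBall.1 (hR hx)).trans (le_max_left R 1)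
  rw [div_mul_eq_mul_div, div_le_iff₀ hC]
  exact (hg.neg_mul_infDist_sublevel_le hz x).trans (by gcongr)
end

section
/- Let H be a finite-dimensional real inner product space and U : H → H an operator whose fixed point set Fix U is nonempty, closed and convex. If U is weakly regular, then U is boundedly regular. -/
open Filter Function Metric Bornology RealInnerProductSpace

/-- In a finite-dimensional real inner product space, if `U` has a
nonempty closed convex fixed point set and is weakly regular, then `U` is
boundedly regular. -/
theorem boundedly_regular_of_weakly_regular_finiteDim
    {H : Type*} [NormedAddCommGroup H] [InnerProductSpace ℝ H] [FiniteDimensional ℝ H]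
    (U : H → H) (hfix : (fixedPoints U).Nonempty)
    (hcl : IsClosed (fixedPoints U)) (hcv : Convex ℝ (fixedPoints U))
    (hWR : ∀ (y : ℕ → H) (p : H),
      (∀ w : H, Tendsto (fun k => ⟪y k, w⟫) atTop (nhds ⟪p, w⟫)) →
      Tendsto (fun k => ‖U (y k) - y k‖) atTop (nhds 0) →
      p ∈ fixedPoints U) :
    ∀ y : ℕ → H, IsBounded (Set.range y) →
      Tendsto (fun k => ‖U (y k) - y k‖) atTop (nhds 0) →
      Tendsto (fun k => infDist (y k) (fixedPoints U)) atTop (nhds 0) := by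
  intro y hbdd hres
  refine tendsto_of_subseq_tendsto fun ns hns => ?_
  obtain ⟨p, -, φ, hφ, hlim⟩ :=
    tendsto_subseq_of_bounded hbdd (x := fun n => y (ns n)) (fun n => Set.mem_range_self _)
  have hcomp : Tendsto (fun n => ns (φ n)) atTop atTop := hns.comp hφ.tendsto_atTop
  have hp : p ∈ fixedPoints U := by
    refine hWR (fun n => y (ns (φ n))) p (fun w => ?_) (hres.comp hcomp)
    exact Tendsto.inner hlim tendsto_const_nhds
  refine ⟨φ, ?_⟩
  have : Tendsto (fun n => infDist (y (ns (φ n))) (fixedPoints U)) atTop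
      (nhds (infDist p (fixedPoints U))) :=
    (continuous_infDist_pt _).continuousAt.tendsto.comp hlim
  rwa [infDist_zero_of_mem hp] at this
end

section
/- Let f : ℝⁿ → ℝ be convex and continuous, let g_f : ℝⁿ → ℝⁿ be a subgradient selection of f, and let P_f be the associated subgradient projection. If f(z) < 0 for some z ∈ ℝⁿ, then P_f is boundedly linearly regular: for every compact set K ⊆ ℝⁿ there exists a constant c_K > 0 such that c_K · d(x, S(f,0)) ≤ ‖P_f x − x‖ for every x ∈ K. -/
open Metric Function RealInnerProductSpace

/-- The subgradient projection associated with `f` and a subgradient selection `g`. -/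
noncomputable def subgradProj {E : Type*} [NormedAddCommGroup E] [InnerProductSpace ℝ E]
    (f : E → ℝ) (g : E → E) : E → E := fun x =>
  if 0 < f x then x - (f x / ‖g x‖ ^ 2) • g x else x

/-- If `f : ℝⁿ → ℝ` is convex and continuous, `g` is a subgradient
selection of `f`, and `f(z) < 0` for some `z`, then the subgradient projection `P_f`
is boundedly linearly regular: on every compact `K` there is `c_K > 0` with
`c_K d(x, S(f,0)) ≤ ‖P_f x − x‖`. -/
theorem subgradProj_boundedly_linearly_regular
    {n : ℕ} (f : EuclideanSpace ℝ (Fin n) → ℝ)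
    (g : EuclideanSpace ℝ (Fin n) → EuclideanSpace ℝ (Fin n))
    (hconv : ConvexOn ℝ Set.univ f) (hcont : Continuous f)
    (hsub : ∀ x y : EuclideanSpace ℝ (Fin n), f x + ⟪g x, y - x⟫ ≤ f y)
    (hneg : ∃ z : EuclideanSpace ℝ (Fin n), f z < 0) :
    ∀ K : Set (EuclideanSpace ℝ (Fin n)), IsCompact K →
      ∃ c : ℝ, 0 < c ∧ ∀ x ∈ K,
        c * infDist x {y : EuclideanSpace ℝ (Fin n) | f y ≤ 0} ≤
          ‖subgradProj f g x - x‖ := by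
  intro K hK
  obtain ⟨z, hz⟩ := hneg
  set δ : ℝ := -f z with hδdef
  have hδ : 0 < δ := by simp [hδdef]; linarith
  obtain ⟨R, hR⟩ := hK.isBounded.subset_closedBall z
  set R' : ℝ := max R 1 with hR'def
  have hR'1 : (1:ℝ) ≤ R' := le_max_right _ _
  have hR'pos : (0:ℝ) < R' := lt_of_lt_of_le one_pos hR'1
  have hKR : ∀ x ∈ K, ‖x - z‖ ≤ R' := by
    intro x hx
    have h := hR hx
    rw [mem_closedBall, dist_eq_norm] at h
    exact h.trans (le_max_left _ _)
  -- bound f on the big ball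
  obtain ⟨w, hw, hwmax⟩ := (isCompact_closedBall z (R'+1)).exists_isMaxOn
    ⟨z, by simp [mem_closedBall]; positivity⟩ hcont.continuousOn
  set C : ℝ := max (f w) 1 with hCdef
  have hC1 : (1:ℝ) ≤ C := le_max_right _ _
  have hCpos : (0:ℝ) < C := lt_of_lt_of_le one_pos hC1
  refine ⟨δ / (R' * C), by positivity, ?_⟩
  intro x hx
  by_cases hfx : 0 < f x
  · -- g x ≠ 0
    have hgne : g x ≠ 0 := by
      intro h
      have := hsub x z
      simp [h] at this
      linarith
    have hgpos : 0 < ‖g x‖ := norm_pos_iff.mpr hgne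
    -- bound on ‖g x‖
    have hgC : ‖g x‖ ≤ C := by
      set u : EuclideanSpace ℝ (Fin n) := ‖g x‖⁻¹ • g x with hu
      have hun : ‖u‖ = 1 := by
        rw [hu, norm_smul, norm_inv, norm_norm, inv_mul_cancel₀ (ne_of_gt hgpos)]
      have hmem : x + u ∈ closedBall z (R' + 1) := by
        rw [mem_closedBall, dist_eq_norm]
        calc ‖x + u - z‖ = ‖(x - z) + u‖ := by rw [add_sub_right_comm]
          _ ≤ ‖x - z‖ + ‖u‖ := norm_add_le _ _
          _ ≤ R' + 1 := by rw [hun]; linarith [hKR x hx]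
      have hinner : ⟪g x, (x + u) - x⟫ = ‖g x‖ := by
        rw [add_sub_cancel_left, hu, real_inner_smul_right, real_inner_self_eq_norm_sq, sq]
        rw [← mul_assoc, inv_mul_cancel₀ (ne_of_gt hgpos), one_mul]
      have h1 := hsub x (x + u)
      rw [hinner] at h1
      have h2 : f (x + u) ≤ f w := hwmax hmem
      calc ‖g x‖ ≤ f (x + u) - f x := by linarith
        _ ≤ f w := by linarith
        _ ≤ C := le_max_left _ _
    -- error bound: infDist x S ≤ f x * R' / δ
    have hdist : infDist x {y : EuclideanSpace ℝ (Fin n) | f y ≤ 0} ≤ f x * R' / δ := by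
      set lam : ℝ := f x / (f x + δ) with hlam
      have hsum : 0 < f x + δ := by linarith
      have hlam0 : 0 ≤ lam := by positivity
      have hlam1 : lam ≤ 1 := by rw [hlam, div_le_one hsum]; linarith
      set y : EuclideanSpace ℝ (Fin n) := (1 - lam) • x + lam • z with hy
      have hyS : y ∈ {y : EuclideanSpace ℝ (Fin n) | f y ≤ 0} := by
        have := hconv.2 (Set.mem_univ x) (Set.mem_univ z) (by linarith : (0:ℝ) ≤ 1 - lam)
          hlam0 (by ring)
        have hlameq : lam * (f x + δ) = f x := by
          rw [hlam, div_mul_cancel₀ _ (ne_of_gt hsum)]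
        have hfz : f z = -δ := by simp [hδdef]
        have heq : (1 - lam) * f x + lam * f z = 0 := by
          rw [hfz]; linear_combination -hlameq
        simp only [Set.mem_setOf_eq]
        calc f y ≤ (1 - lam) * f x + lam * f z := by
              simpa [smul_eq_mul] using this
          _ = 0 := heq
      have hxy : dist x y = lam * ‖x - z‖ := by
        rw [dist_eq_norm, hy]
        have : x - ((1 - lam) • x + lam • z) = lam • (x - z) := by
          rw [smul_sub, sub_smul, one_smul]
          abel
        rw [this, norm_smul, Real.norm_eq_abs, abs_of_nonneg hlam0]
      calc infDist x {y : EuclideanSpace ℝ (Fin n) | f y ≤ 0} ≤ dist x y :=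
            infDist_le_dist_of_mem hyS
        _ = lam * ‖x - z‖ := hxy
        _ ≤ (f x / δ) * R' := by
            apply mul_le_mul _ (hKR x hx) (norm_nonneg _) (by positivity)
            rw [hlam]
            apply div_le_div_of_nonneg_left (le_of_lt hfx) hδ
            linarith
        _ = f x * R' / δ := by ring
    -- compute the norm
    have hnorm : ‖subgradProj f g x - x‖ = f x / ‖g x‖ := by
      rw [subgradProj, if_pos hfx]
      have : x - (f x / ‖g x‖ ^ 2) • g x - x = -((f x / ‖g x‖ ^ 2) • g x) := by abel
      rw [this, norm_neg, norm_smul, Real.norm_eq_abs, abs_of_nonneg (by positivity)]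
      field_simp
    rw [hnorm]
    calc δ / (R' * C) * infDist x {y : EuclideanSpace ℝ (Fin n) | f y ≤ 0}
        ≤ δ / (R' * C) * (f x * R' / δ) := by
          apply mul_le_mul_of_nonneg_left hdist (by positivity)
      _ = f x / C := by field_simp
      _ ≤ f x / ‖g x‖ := div_le_div_of_nonneg_left (le_of_lt hfx) hgpos hgC
  · -- f x ≤ 0 : x ∈ S, both sides
    have hxS : x ∈ {y : EuclideanSpace ℝ (Fin n) | f y ≤ 0} := by
      simp only [Set.mem_setOf_eq]; linarith [not_lt.mp hfx]
    rw [infDist_zero_of_mem hxS, subgradProj, if_neg hfx]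
    simp
end

section
/- Let {x^k} be generated by the double-layer fixed point algorithm under conditions (i) and (ii), and assume in addition: (iii) if lim_{k→∞} max_{i∈I_k} p_i(x^k) = 0 then lim_{k→∞} max_{j∈J_k} p_j(x^k) = 0; (iv) for every bounded sequence {y^k} ⊆ H and each i ∈ I, p_i(y^k) → 0 if and only if ‖U_i y^k − y^k‖ → 0. If for each i ∈ I the operator U_i is weakly regular, then {x^k} converges weakly to some point x^∞ ∈ C. -/
/-!
The iteration is Fejér monotone with respect to `C`: for `z ∈ C` the cutter inequalities give
`‖x^{k+1} - z‖² + α⁻(2 - α⁺) ∑_{i ∈ I_k} ω_i^k ‖U_i x^k - x^k‖² ≤ ‖x^k - z‖²`. Hence the weighted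
residuals and the steps `‖x^{k+1} - x^k‖` tend to zero, and `‖U_i x^k - x^k‖ → 0` along the indices
with `i ∈ I_k`. Condition (iv) turns this into `max_{i ∈ I_k} p_i(x^k) → 0`, condition (iii) moves
it to `J_k`, and (iv) again gives `‖U_i x^k - x^k‖ → 0` along the indices with `i ∈ J_k`. By (ii)
every index is within `s` steps of such an index, so weak regularity puts every weak cluster point
in `C`, and Opial's lemma gives weak convergence.
-/

open Filter Function Metric Bornology RealInnerProductSpace Topology

theorem tendsto_zero_of_add_mul_le {a S : ℕ → ℝ} {c : ℝ} (hc : 0 < c) (ha : ∀ k, 0 ≤ a k)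
    (hS : ∀ k, 0 ≤ S k) (h : ∀ k, a (k + 1) + c * S k ≤ a k) : Tendsto S atTop (𝓝 0) := by
  have hanti : Antitone a := antitone_nat_of_succ_le fun k => by nlinarith [h k, hS k]
  have hconv := tendsto_atTop_ciInf hanti ⟨0, by rintro _ ⟨k, rfl⟩; exact ha k⟩
  refine squeeze_zero hS (fun k => show S k ≤ (a k - a (k + 1)) / c from
    (le_div_iff₀' hc).2 (by linarith [h k])) ?_
  simpa using (hconv.sub (hconv.comp (tendsto_add_atTop_nat 1))).div_const c

theorem tendsto_zero_of_sq_le {α : Type*} {l : Filter α} {f g : α → ℝ}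
    (hg : Tendsto g l (𝓝 0)) (h : ∀ᶠ a in l, f a ^ 2 ≤ g a) : Tendsto f l (𝓝 0) :=
  squeeze_zero_norm' (h.mono fun _ ha => Real.abs_le_sqrt ha) (by simpa using hg.sqrt)

theorem tendsto_sup'_nhds_zero_iff {ι : Type*} [Finite ι] {I : ℕ → Finset ι}
    (hI : ∀ k, (I k).Nonempty) {f : ι → ℕ → ℝ} (hf : ∀ i k, 0 ≤ f i k) :
    Tendsto (fun k => (I k).sup' (hI k) fun i => f i k) atTop (𝓝 0) ↔
      ∀ i, Tendsto (f i) (atTop ⊓ 𝓟 {k | i ∈ I k}) (𝓝 0) := by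
  simp only [tendsto_order, eventually_inf_principal]
  constructor
  · intro h i
    exact ⟨fun a ha => Eventually.of_forall fun k _ => ha.trans_le (hf i k),
      fun a ha => (h.2 a ha).mono fun k hk hi => (Finset.le_sup' (fun i => f i k) hi).trans_lt hk⟩
  · intro h
    refine ⟨fun a ha => Eventually.of_forall fun k => ?_, fun a ha =>
      (eventually_all.2 fun i => (h i).2 a ha).mono fun k hk => (Finset.sup'_lt_iff _).2 hk⟩
    obtain ⟨i, hi⟩ := hI k
    exact ha.trans_le ((hf i k).trans (Finset.le_sup' (fun i => f i k) hi))

section Seminormed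

variable {E : Type*} [SeminormedAddCommGroup E]

theorem tendsto_norm_add_sub_of_tendsto_norm_succ_sub {u : ℕ → E}
    (h : Tendsto (fun k => ‖u (k + 1) - u k‖) atTop (𝓝 0)) {L : ℕ → ℕ} {s : ℕ}
    (hL : ∀ k, L k ≤ s) : Tendsto (fun k => ‖u (k + L k) - u k‖) atTop (𝓝 0) := by
  have hsum : Tendsto (fun k => ∑ j ∈ Finset.range s, ‖u (k + j + 1) - u (k + j)‖) atTop (𝓝 0) := by
    simpa using tendsto_finsetSum _ fun j _ => h.comp (tendsto_add_atTop_nat j)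
  refine squeeze_zero (fun k => norm_nonneg _) (fun k => ?_) hsum
  calc ‖u (k + L k) - u k‖ ≤ ∑ j ∈ Finset.range (L k), ‖u (k + j + 1) - u (k + j)‖ := by
        simpa [dist_eq_norm, norm_sub_rev, add_assoc] using
          dist_le_range_sum_dist (fun j => u (k + j)) (L k)
    _ ≤ _ := Finset.sum_le_sum_of_subset_of_nonneg (Finset.range_mono (hL k))
        fun _ _ _ => norm_nonneg _

theorem tendsto_proximity_iff_tendsto_residual {T : E → E} {p : E → ℝ}
    (hpT : ∀ y : ℕ → E, IsBounded (Set.range y) →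
      (Tendsto (fun k => p (y k)) atTop (𝓝 0) ↔ Tendsto (fun k => ‖T (y k) - y k‖) atTop (𝓝 0)))
    {z : E} (hz : z ∈ fixedPoints T) (hpz : p z = 0) {x : ℕ → E}
    (hx : IsBounded (Set.range x)) (A : Set ℕ) :
    Tendsto (fun k => p (x k)) (atTop ⊓ 𝓟 A) (𝓝 0) ↔
      Tendsto (fun k => ‖T (x k) - x k‖) (atTop ⊓ 𝓟 A) (𝓝 0) := by
  classical
  -- Replacing `x k` by the fixed point `z` for `k ∉ A` turns convergence along `A` into
  -- convergence of a bounded sequence, to which `hpT` applies.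
  set y := A.piecewise x fun _ => z
  have hy : IsBounded (Set.range y) := (hx.insert z).subset <| by
    rintro _ ⟨k, rfl⟩
    by_cases hk : k ∈ A <;> simp [y, hk]
  have hrestrict : ∀ f : E → ℝ, f z = 0 → (Tendsto (fun k => f (x k)) (atTop ⊓ 𝓟 A) (𝓝 0) ↔
      Tendsto (fun k => f (y k)) atTop (𝓝 0)) := fun f hf => by
    refine (tendsto_congr' (eventually_inf_principal.2 (Eventually.of_forall fun k hk => ?_))).trans
      (tendsto_inf_principal_nhds_iff_of_forall_eq fun k hk => ?_)
    · simp [y, hk]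
    · simp [y, hk, hf]
  rw [hrestrict p hpz, hrestrict (fun v => ‖T v - v‖) (by simp [hz.eq]), hpT y hy]

def weightedResidual {ι : Type*} (U : ι → E → E) (s : Finset ι) (w : ι → ℝ) (y : E) : ℝ :=
  ∑ i ∈ s, w i * ‖U i y - y‖ ^ 2

theorem weightedResidual_nonneg {ι : Type*} {U : ι → E → E} {s : Finset ι} {w : ι → ℝ}
    (hw : ∀ i ∈ s, 0 ≤ w i) (y : E) : 0 ≤ weightedResidual U s w y :=
  Finset.sum_nonneg fun i hi => mul_nonneg (hw i hi) (sq_nonneg _)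

theorem tendsto_residual_of_tendsto_weightedResidual {ι : Type*} {U : ι → E → E}
    {I : ℕ → Finset ι} {ω : ℕ → ι → ℝ} {x : ℕ → E} {c : ℝ} (hc : 0 < c)
    (hω : ∀ k, ∀ i ∈ I k, c ≤ ω k i)
    (hR : Tendsto (fun k => weightedResidual U (I k) (ω k) (x k)) atTop (𝓝 0)) (i : ι) :
    Tendsto (fun k => ‖U i (x k) - x k‖) (atTop ⊓ 𝓟 {k | i ∈ I k}) (𝓝 0) := by
  have hRc : Tendsto (fun k => weightedResidual U (I k) (ω k) (x k) / c) atTop (𝓝 0) := by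
    simpa using hR.div_const c
  refine tendsto_zero_of_sq_le (hRc.mono_left inf_le_left)
    (eventually_inf_principal.2 (Eventually.of_forall fun k hi => ?_))
  have hω₀ : ∀ j ∈ I k, 0 ≤ ω k j := fun j hj => hc.le.trans (hω k j hj)
  rw [le_div_iff₀' hc]
  calc c * ‖U i (x k) - x k‖ ^ 2 ≤ ω k i * ‖U i (x k) - x k‖ ^ 2 :=
        mul_le_mul_of_nonneg_right (hω k i hi) (sq_nonneg _)
    _ ≤ weightedResidual U (I k) (ω k) (x k) :=
        Finset.single_le_sum (f := fun j => ω k j * ‖U j (x k) - x k‖ ^ 2)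
          (fun j hj => mul_nonneg (hω₀ j hj) (sq_nonneg _)) hi

def IsFejerMonotone (u : ℕ → E) (C : Set E) : Prop :=
  ∀ z ∈ C, ∀ k, ‖u (k + 1) - z‖ ≤ ‖u k - z‖

namespace IsFejerMonotone

variable {u : ℕ → E} {C : Set E} {z : E}

theorem of_norm_sub_sq_add_le {c : ℕ → ℝ} (hc : ∀ k, 0 ≤ c k)
    (h : ∀ z ∈ C, ∀ k, ‖u (k + 1) - z‖ ^ 2 + c k ≤ ‖u k - z‖ ^ 2) : IsFejerMonotone u C :=
  fun z hz k => (sq_le_sq₀ (norm_nonneg _) (norm_nonneg _)).1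
    ((le_add_of_nonneg_right (hc k)).trans (h z hz k))

theorem tendsto_norm_sub (h : IsFejerMonotone u C) (hz : z ∈ C) :
    ∃ d, Tendsto (fun k => ‖u k - z‖) atTop (𝓝 d) :=
  ⟨_, tendsto_atTop_ciInf (antitone_nat_of_succ_le (h z hz)) ⟨0, by
    rintro _ ⟨k, rfl⟩
    exact norm_nonneg _⟩⟩

theorem isBounded_range (h : IsFejerMonotone u C) (hz : z ∈ C) : IsBounded (Set.range u) :=
  isBounded_closedBall.subset <| Set.range_subset_iff.2 fun k =>
    mem_closedBall_iff_norm.2 <|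
      antitone_nat_of_succ_le (f := fun k => ‖u k - z‖) (h z hz) (Nat.zero_le k)

end IsFejerMonotone

end Seminormed

section Hilbert

variable {H : Type*} [NormedAddCommGroup H] [InnerProductSpace ℝ H]

def WeakTendsto (u : ℕ → H) (z : H) : Prop :=
  ∀ w, Tendsto (fun k => ⟪u k, w⟫) atTop (𝓝 ⟪z, w⟫)

theorem WeakTendsto.of_tendsto_norm_sub {u v : ℕ → H} {z : H} (h : WeakTendsto u z)
    (huv : Tendsto (fun k => ‖v k - u k‖) atTop (𝓝 0)) : WeakTendsto v z := by
  intro w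
  have hdiff : Tendsto (fun k => ⟪v k - u k, w⟫) atTop (𝓝 0) := by
    simpa using (tendsto_zero_iff_norm_tendsto_zero.2 huv).inner (tendsto_const_nhds (x := w))
  simpa [inner_sub_left] using (h w).add hdiff

theorem exists_weakTendsto_comp_of_isBounded [CompleteSpace H] {u : ℕ → H}
    (hu : IsBounded (Set.range u)) :
    ∃ φ : ℕ → ℕ, StrictMono φ ∧ ∃ z, WeakTendsto (u ∘ φ) z := by
  -- The closed span `K` of the sequence is separable, so the sequential Banach–Alaoglu theorem
  -- applies in its dual, which the Riesz map identifies with `K`.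
  set K := (Submodule.span ℝ (Set.range u)).topologicalClosure
  have : TopologicalSpace.SeparableSpace K :=
    ((Set.countable_range u).isSeparable.span (R := ℝ)).closure.separableSpace
  have huK : ∀ k, u k ∈ K := fun k =>
    Submodule.le_topologicalClosure _ (Submodule.subset_span ⟨k, rfl⟩)
  obtain ⟨M, hM⟩ := hu.exists_norm_le
  let f : ℕ → WeakDual ℝ K := fun k =>
    StrongDual.toWeakDual (InnerProductSpace.toDual ℝ K ⟨u k, huK k⟩)
  have hf : ∀ k, f k ∈ WeakDual.toStrongDual ⁻¹' closedBall 0 M := fun k =>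
    ((dist_zero_right _).trans ((InnerProductSpace.toDual ℝ K).norm_map _)).trans_le
      (hM _ ⟨k, rfl⟩)
  obtain ⟨g, -, φ, hφ, hg⟩ := WeakDual.isSeqCompact_closedBall ℝ K 0 M hf
  refine ⟨φ, hφ, (InnerProductSpace.toDual ℝ K).symm (WeakDual.toStrongDual g), fun w => ?_⟩
  have hproj : ∀ v ∈ K, ⟪v, w⟫ = ⟪v, K.starProjection w⟫ := fun v hv => by
    rw [← sub_eq_zero, ← inner_sub_right, real_inner_comm]
    exact K.starProjection_inner_eq_zero w v hv
  convert tendsto_iff_forall_eval_tendsto_topDualPairing.1 hg (K.orthogonalProjectionOnto w)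
    using 2
  · exact hproj _ (huK _)
  · rw [hproj _ (Submodule.coe_mem _)]
    exact congrArg (· (K.orthogonalProjectionOnto w))
      ((InnerProductSpace.toDual ℝ K).apply_symm_apply (WeakDual.toStrongDual g))

theorem eq_of_weakTendsto_of_tendsto_norm_sub {u : ℕ → H} {z₁ z₂ : H} {d₁ d₂ : ℝ}
    (hd₁ : Tendsto (fun k => ‖u k - z₁‖) atTop (𝓝 d₁))
    (hd₂ : Tendsto (fun k => ‖u k - z₂‖) atTop (𝓝 d₂))
    {φ₁ φ₂ : ℕ → ℕ} (hφ₁ : Tendsto φ₁ atTop atTop) (hφ₂ : Tendsto φ₂ atTop atTop)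
    (h₁ : WeakTendsto (u ∘ φ₁) z₁) (h₂ : WeakTendsto (u ∘ φ₂) z₂) : z₁ = z₂ := by
  -- By polarization `⟪u k, z₁ - z₂⟫` is an affine function of the two convergent distances.
  have hpolar : ∀ k,
      ⟪u k, z₁ - z₂⟫ = (‖z₁‖ ^ 2 - ‖z₂‖ ^ 2 - (‖u k - z₁‖ ^ 2 - ‖u k - z₂‖ ^ 2)) / 2 :=
    fun k => by rw [inner_sub_right, norm_sub_sq_real, norm_sub_sq_real]; ring
  have hL := (tendsto_const_nhds (x := ‖z₁‖ ^ 2 - ‖z₂‖ ^ 2) |>.sub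
    ((hd₁.pow 2).sub (hd₂.pow 2))).div_const 2
  simp only [← hpolar] at hL
  have e₁ := tendsto_nhds_unique (h₁ (z₁ - z₂)) (hL.comp hφ₁)
  have e₂ := tendsto_nhds_unique (h₂ (z₁ - z₂)) (hL.comp hφ₂)
  rw [← sub_eq_zero, ← inner_self_eq_zero (𝕜 := ℝ), inner_sub_left, e₁, e₂, sub_self]

/-- Opial's lemma. -/
theorem IsFejerMonotone.exists_weakTendsto [CompleteSpace H] {u : ℕ → H} {C : Set H}
    (h : IsFejerMonotone u C) (hC : C.Nonempty)
    (hcluster : ∀ φ : ℕ → ℕ, Tendsto φ atTop atTop → ∀ z, WeakTendsto (u ∘ φ) z → z ∈ C) :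
    ∃ z ∈ C, WeakTendsto u z := by
  obtain ⟨φ, hφ, z, hz⟩ := exists_weakTendsto_comp_of_isBounded (h.isBounded_range hC.some_mem)
  have hzC := hcluster φ hφ.tendsto_atTop z hz
  refine ⟨z, hzC, fun w => tendsto_of_subseq_tendsto fun ns hns => ?_⟩
  obtain ⟨ψ, hψ, z', hz'⟩ :=
    exists_weakTendsto_comp_of_isBounded (h.isBounded_range hC.some_mem |>.subset
      (Set.range_comp_subset_range ns u))
  have hnsψ := hns.comp hψ.tendsto_atTop
  have hz'C := hcluster _ hnsψ z' hz'
  obtain ⟨d, hd⟩ := h.tendsto_norm_sub hzC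
  obtain ⟨d', hd'⟩ := h.tendsto_norm_sub hz'C
  obtain rfl := eq_of_weakTendsto_of_tendsto_norm_sub hd' hd hnsψ hφ.tendsto_atTop hz' hz
  exact ⟨ψ, hz' w⟩

def IsCutter (T : H → H) : Prop :=
  ∀ x, ∀ z ∈ fixedPoints T, ⟪x - T x, z - T x⟫ ≤ 0

def IsWeaklyRegular (T : H → H) : Prop :=
  ∀ (y : ℕ → H) (z : H), WeakTendsto y z → Tendsto (fun k => ‖T (y k) - y k‖) atTop (𝓝 0) →
    z ∈ fixedPoints T

theorem IsCutter.norm_sub_sq_le_inner {T : H → H} (hT : IsCutter T) (x : H) {z : H}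
    (hz : z ∈ fixedPoints T) : ‖T x - x‖ ^ 2 ≤ ⟪T x - x, z - x⟫ := by
  have hsplit : ⟪T x - x, z - x⟫ = ‖T x - x‖ ^ 2 - ⟪x - T x, z - T x⟫ := by
    rw [← real_inner_self_eq_norm_sq, ← neg_sub (T x) x, inner_neg_left, sub_neg_eq_add,
      ← inner_add_right, sub_add_sub_cancel']
  linarith [hT x z hz]

theorem norm_sum_smul_sq_le {ι : Type*} {s : Finset ι} {w : ι → ℝ} (hw : ∀ i ∈ s, 0 ≤ w i)
    (hw₁ : ∑ i ∈ s, w i = 1) (v : ι → H) :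
    ‖∑ i ∈ s, w i • v i‖ ^ 2 ≤ ∑ i ∈ s, w i * ‖v i‖ ^ 2 :=
  ((convexOn_norm convex_univ).pow (fun _ _ => norm_nonneg _) 2).map_sum_le hw hw₁
    (fun _ _ => Set.mem_univ _)

theorem Finset.sum_smul_sub_of_sum_eq_one {ι : Type*} {s : Finset ι} {w : ι → ℝ}
    (hw₁ : ∑ i ∈ s, w i = 1) (v : ι → H) (y : H) :
    ∑ i ∈ s, w i • v i - y = ∑ i ∈ s, w i • (v i - y) := by
  simp_rw [smul_sub, Finset.sum_sub_distrib, ← Finset.sum_smul, hw₁, one_smul]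

theorem norm_add_smul_sub_sq_le {x z v : H} {α S : ℝ} (hα : 0 ≤ α) (hv : ‖v‖ ^ 2 ≤ S)
    (hS : S ≤ ⟪v, z - x⟫) : ‖x + α • v - z‖ ^ 2 + α * (2 - α) * S ≤ ‖x - z‖ ^ 2 := by
  have hexpand : ‖x + α • v - z‖ ^ 2 = ‖x - z‖ ^ 2 - 2 * α * ⟪v, z - x⟫ + α ^ 2 * ‖v‖ ^ 2 := by
    rw [show x + α • v - z = (x - z) + α • v by abel, norm_add_sq_real, norm_smul,
      real_inner_smul_right, real_inner_comm, ← neg_sub z x, inner_neg_right, mul_pow,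
      Real.norm_eq_abs, sq_abs]
    ring
  rw [hexpand]
  nlinarith [mul_le_mul_of_nonneg_left hS hα, mul_le_mul_of_nonneg_left hv (sq_nonneg α)]

section RelaxedAverage

variable {ι : Type*} {s : Finset ι} {U : ι → H → H} {w : ι → ℝ}

theorem norm_relaxedAverage_sub_self_sq_le (hw : ∀ i ∈ s, 0 ≤ w i) (hw₁ : ∑ i ∈ s, w i = 1)
    (α : ℝ) (y : H) :
    ‖y + α • (∑ i ∈ s, w i • U i y - y) - y‖ ^ 2 ≤ α ^ 2 * weightedResidual U s w y := by
  rw [add_sub_cancel_left, norm_smul, mul_pow, Real.norm_eq_abs, sq_abs,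
    Finset.sum_smul_sub_of_sum_eq_one hw₁]
  exact mul_le_mul_of_nonneg_left (norm_sum_smul_sq_le hw hw₁ _) (sq_nonneg α)

theorem norm_relaxedAverage_sub_sq_add_le (hU : ∀ i ∈ s, IsCutter (U i))
    (hw : ∀ i ∈ s, 0 ≤ w i) (hw₁ : ∑ i ∈ s, w i = 1) {α : ℝ} (hα : 0 ≤ α) (y : H) {z : H}
    (hz : ∀ i ∈ s, z ∈ fixedPoints (U i)) :
    ‖y + α • (∑ i ∈ s, w i • U i y - y) - z‖ ^ 2 + α * (2 - α) * weightedResidual U s w y ≤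
      ‖y - z‖ ^ 2 := by
  rw [Finset.sum_smul_sub_of_sum_eq_one hw₁]
  refine norm_add_smul_sub_sq_le hα (norm_sum_smul_sq_le hw hw₁ _) ?_
  rw [sum_inner]
  refine Finset.sum_le_sum fun i hi => ?_
  rw [real_inner_smul_left]
  exact mul_le_mul_of_nonneg_left ((hU i hi).norm_sub_sq_le_inner y (hz i hi)) (hw i hi)

end RelaxedAverage

section RelaxedIteration

variable {ι : Type*} {U : ι → H → H} {I : ℕ → Finset ι} {ω : ℕ → ι → ℝ} {α : ℕ → ℝ}
  {x : ℕ → H} {a b : ℝ}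

theorem relaxedIteration_norm_sub_sq_add_le (hU : ∀ i, IsCutter (U i)) (hω : ∀ k, ∀ i ∈ I k, 0 ≤ ω k i)
    (hω₁ : ∀ k, ∑ i ∈ I k, ω k i = 1) (ha : 0 ≤ a) (hb : b ≤ 2) (hα : ∀ k, α k ∈ Set.Icc a b)
    (hrec : ∀ k, x (k + 1) = x k + α k • (∑ i ∈ I k, ω k i • U i (x k) - x k)) {z : H}
    (hz : ∀ i, z ∈ fixedPoints (U i)) (k : ℕ) :
    ‖x (k + 1) - z‖ ^ 2 + a * (2 - b) * weightedResidual U (I k) (ω k) (x k) ≤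
      ‖x k - z‖ ^ 2 := by
  refine le_trans ?_ (norm_relaxedAverage_sub_sq_add_le (fun i _ => hU i) (hω k) (hω₁ k)
    (ha.trans (hα k).1) (x k) fun i _ => hz i)
  rw [hrec]
  gcongr _ + ?_ * _
  · exact weightedResidual_nonneg (hω k) _
  · exact mul_le_mul (hα k).1 (by linarith [(hα k).2]) (by linarith) (ha.trans (hα k).1)

theorem relaxedIteration_norm_succ_sub_sq_le (hω : ∀ k, ∀ i ∈ I k, 0 ≤ ω k i)
    (hω₁ : ∀ k, ∑ i ∈ I k, ω k i = 1) (ha : 0 ≤ a) (hb : b ≤ 2) (hα : ∀ k, α k ∈ Set.Icc a b)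
    (hrec : ∀ k, x (k + 1) = x k + α k • (∑ i ∈ I k, ω k i • U i (x k) - x k)) (k : ℕ) :
    ‖x (k + 1) - x k‖ ^ 2 ≤ 4 * weightedResidual U (I k) (ω k) (x k) := by
  rw [hrec]
  refine (norm_relaxedAverage_sub_self_sq_le (hω k) (hω₁ k) _ _).trans
    (mul_le_mul_of_nonneg_right ?_ (weightedResidual_nonneg (hω k) _))
  nlinarith [(hα k).1, (hα k).2]

end RelaxedIteration

theorem IsWeaklyRegular.mem_fixedPoints {T : H → H} (hT : IsWeaklyRegular T) {u : ℕ → H}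
    (hstep : Tendsto (fun k => ‖u (k + 1) - u k‖) atTop (𝓝 0)) {A : Set ℕ} {s : ℕ}
    (hA : ∀ k, ∃ l < s, k + l ∈ A)
    (hres : Tendsto (fun k => ‖T (u k) - u k‖) (atTop ⊓ 𝓟 A) (𝓝 0)) {φ : ℕ → ℕ}
    (hφ : Tendsto φ atTop atTop) {z : H} (hz : WeakTendsto (u ∘ φ) z) : z ∈ fixedPoints T := by
  -- Moving each `φ n` forward by less than `s` steps lands in `A` without changing the weak limit.
  choose L hLs hLA using hA
  have hq : Tendsto (fun n => φ n + L (φ n)) atTop (atTop ⊓ 𝓟 A) :=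
    tendsto_inf.2 ⟨tendsto_atTop_mono (fun n => Nat.le_add_right _ _) hφ,
      tendsto_principal.2 (Eventually.of_forall fun n => hLA _)⟩
  refine hT _ z (hz.of_tendsto_norm_sub ?_) (hres.comp hq)
  exact (tendsto_norm_add_sub_of_tendsto_norm_succ_sub hstep fun k => (hLs k).le).comp hφ

end Hilbert

theorem doubleLayer_weak_convergence_general
    {H : Type*} [NormedAddCommGroup H] [InnerProductSpace ℝ H] [CompleteSpace H]
    {m : ℕ}
    (U : Fin m → H → H) (p : Fin m → H → ℝ)
    (hcutter : ∀ i, ∀ x : H, ∀ z ∈ fixedPoints (U i), ⟪x - U i x, z - U i x⟫ ≤ 0)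
    (hpnonneg : ∀ i, ∀ x : H, 0 ≤ p i x)
    (hpfix : ∀ i, fixedPoints (U i) = {x : H | p i x = 0})
    (hC : (⋂ i, fixedPoints (U i)).Nonempty)
    (x : ℕ → H) (Ik Jk : ℕ → Finset (Fin m)) (α : ℕ → ℝ) (ω : ℕ → Fin m → ℝ)
    (hIkne : ∀ k, (Ik k).Nonempty) (hIJ : ∀ k, Ik k ⊆ Jk k)
    (αminus αplus ωminus : ℝ)
    (hαminus : αminus ∈ Set.Ioc (0 : ℝ) 1) (hαplus : αplus ∈ Set.Ico (1 : ℝ) 2)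
    (hωminus : ωminus ∈ Set.Ioc (0 : ℝ) 1)
    (hα : ∀ k, α k ∈ Set.Icc αminus αplus)
    (hω : ∀ k, ∀ i ∈ Ik k, ω k i ∈ Set.Icc ωminus 1)
    (hωsum : ∀ k, ∑ i ∈ Ik k, ω k i = 1)
    (hrec : ∀ k, x (k + 1) = x k + α k • ((∑ i ∈ Ik k, ω k i • U i (x k)) - x k))
    (s : ℕ)
    (hcover : ∀ k, ∀ i : Fin m, ∃ l < s, i ∈ Jk (k + l))
    (hiii : Tendsto (fun k => (Ik k).sup' (hIkne k) fun i => p i (x k)) atTop (nhds 0) →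
      Tendsto (fun k => (Jk k).sup' ((hIkne k).mono (hIJ k)) fun i => p i (x k))
        atTop (nhds 0))
    (hiv : ∀ y : ℕ → H, IsBounded (Set.range y) → ∀ i,
      (Tendsto (fun k => p i (y k)) atTop (nhds 0) ↔
        Tendsto (fun k => ‖U i (y k) - y k‖) atTop (nhds 0)))
    (hwr : ∀ i, ∀ (y : ℕ → H) (z : H),
      (∀ w : H, Tendsto (fun k => ⟪y k, w⟫) atTop (nhds ⟪z, w⟫)) →
      Tendsto (fun k => ‖U i (y k) - y k‖) atTop (nhds 0) →
      z ∈ fixedPoints (U i)) :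
    ∃ xinf ∈ ⋂ i, fixedPoints (U i), ∀ w : H,
      Tendsto (fun k => ⟪x k, w⟫) atTop (nhds ⟪xinf, w⟫) := by
  obtain ⟨z₀, hz₀⟩ := hC
  set C := ⋂ i, fixedPoints (U i)
  have hω₀ : ∀ k, ∀ i ∈ Ik k, 0 ≤ ω k i := fun k i hi => hωminus.1.le.trans (hω k i hi).1
  have hc : 0 < αminus * (2 - αplus) := mul_pos hαminus.1 (by linarith [hαplus.2])
  have hdescent : ∀ z ∈ C, ∀ k, ‖x (k + 1) - z‖ ^ 2 + αminus * (2 - αplus) *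
      weightedResidual U (Ik k) (ω k) (x k) ≤ ‖x k - z‖ ^ 2 := fun z hz =>
    relaxedIteration_norm_sub_sq_add_le hcutter hω₀ hωsum hαminus.1.le hαplus.2.le hα hrec
      (Set.mem_iInter.1 hz)
  have hfejer : IsFejerMonotone x C := .of_norm_sub_sq_add_le
    (fun k => mul_nonneg hc.le (weightedResidual_nonneg (hω₀ k) _)) hdescent
  have hR := tendsto_zero_of_add_mul_le (a := fun k => ‖x k - z₀‖ ^ 2) hc (fun _ => sq_nonneg _)
    (fun k => weightedResidual_nonneg (hω₀ k) _) (hdescent z₀ hz₀)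
  have hstep : Tendsto (fun k => ‖x (k + 1) - x k‖) atTop (𝓝 0) :=
    tendsto_zero_of_sq_le (by simpa using hR.const_mul 4) (.of_forall
      (relaxedIteration_norm_succ_sub_sq_le hω₀ hωsum hαminus.1.le hαplus.2.le hα hrec))
  have hprox : ∀ i A, Tendsto (fun k => p i (x k)) (atTop ⊓ 𝓟 A) (𝓝 0) ↔
      Tendsto (fun k => ‖U i (x k) - x k‖) (atTop ⊓ 𝓟 A) (𝓝 0) := fun i =>
    tendsto_proximity_iff_tendsto_residual (hiv · · i) (Set.mem_iInter.1 hz₀ i)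
      (by simpa [hpfix] using Set.mem_iInter.1 hz₀ i) (hfejer.isBounded_range hz₀)
  have hresI := tendsto_residual_of_tendsto_weightedResidual hωminus.1
    (fun k i hi => (hω k i hi).1) hR
  have hpJ := hiii ((tendsto_sup'_nhds_zero_iff hIkne fun i k => hpnonneg i (x k)).2
    fun i => (hprox i _).2 (hresI i))
  have hresJ : ∀ i, Tendsto (fun k => ‖U i (x k) - x k‖) (atTop ⊓ 𝓟 {k | i ∈ Jk k}) (𝓝 0) :=
    fun i => (hprox i _).1 ((tendsto_sup'_nhds_zero_iff _ fun i k => hpnonneg i (x k)).1 hpJ i)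
  refine hfejer.exists_weakTendsto ⟨z₀, hz₀⟩ fun φ hφ z hz => Set.mem_iInter.2 fun i => ?_
  exact IsWeaklyRegular.mem_fixedPoints (hwr i) hstep (hcover · i) (hresJ i) hφ hz

/-- Weak convergence of the double-layer fixed point algorithm with
weakly regular cutters. -/
theorem doubleLayer_weak_convergence
    {H : Type*} [NormedAddCommGroup H] [InnerProductSpace ℝ H] [CompleteSpace H]
    {m : ℕ} [NeZero m]
    (U : Fin m → H → H) (p : Fin m → H → ℝ)
    (hcutter : ∀ i, ∀ x : H, ∀ z ∈ fixedPoints (U i), ⟪x - U i x, z - U i x⟫ ≤ 0)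
    (hpnonneg : ∀ i, ∀ x : H, 0 ≤ p i x)
    (hpfix : ∀ i, fixedPoints (U i) = {x : H | p i x = 0})
    (hC : (⋂ i, fixedPoints (U i)).Nonempty)
    (x : ℕ → H) (Ik Jk : ℕ → Finset (Fin m)) (α : ℕ → ℝ) (ω : ℕ → Fin m → ℝ)
    (hIkne : ∀ k, (Ik k).Nonempty) (hIJ : ∀ k, Ik k ⊆ Jk k)
    (αminus αplus ωminus : ℝ)
    (hαminus : αminus ∈ Set.Ioc (0 : ℝ) 1) (hαplus : αplus ∈ Set.Ico (1 : ℝ) 2)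
    (hωminus : ωminus ∈ Set.Ioc (0 : ℝ) 1)
    (hα : ∀ k, α k ∈ Set.Icc αminus αplus)
    (hω : ∀ k, ∀ i ∈ Ik k, ω k i ∈ Set.Icc ωminus 1)
    (hωsum : ∀ k, ∑ i ∈ Ik k, ω k i = 1)
    (hrec : ∀ k, x (k + 1) = x k + α k • ((∑ i ∈ Ik k, ω k i • U i (x k)) - x k))
    (s : ℕ) (hs : 1 ≤ s)
    (hcover : ∀ k, ∀ i : Fin m, ∃ l < s, i ∈ Jk (k + l))
    (hiii : Tendsto (fun k => (Ik k).sup' (hIkne k) fun i => p i (x k)) atTop (nhds 0) →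
      Tendsto (fun k => (Jk k).sup' ((hIkne k).mono (hIJ k)) fun i => p i (x k))
        atTop (nhds 0))
    (hiv : ∀ y : ℕ → H, IsBounded (Set.range y) → ∀ i,
      (Tendsto (fun k => p i (y k)) atTop (nhds 0) ↔
        Tendsto (fun k => ‖U i (y k) - y k‖) atTop (nhds 0)))
    (hwr : ∀ i, ∀ (y : ℕ → H) (z : H),
      (∀ w : H, Tendsto (fun k => ⟪y k, w⟫) atTop (nhds ⟪z, w⟫)) →
      Tendsto (fun k => ‖U i (y k) - y k‖) atTop (nhds 0) →
      z ∈ fixedPoints (U i)) :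
    ∃ xinf ∈ ⋂ i, fixedPoints (U i), ∀ w : H,
      Tendsto (fun k => ⟪x k, w⟫) atTop (nhds ⟪xinf, w⟫) :=
  doubleLayer_weak_convergence_general U p hcutter hpnonneg hpfix hC x Ik Jk α ω hIkne hIJ αminus
    αplus ωminus hαminus hαplus hωminus hα hω hωsum hrec s hcover hiii hiv hwr
end

section
/- Let {x^k} be generated by the double-layer fixed point algorithm under conditions (i) and (ii), and assume: (iii) I_k ∩ Argmax_{j∈J_k} p_j(x^k) ≠ ∅ for every k; (iv) for r := d(x^0, C) > 0 there are numbers δ_r, Δ_r > 0 such that δ_r · d(x, C_i) ≤ p_i(x) ≤ Δ_r · ‖U_i x − x‖ for every x ∈ B(P_C x^0, r) and every i ∈ I. If the family {C_i : i ∈ I} is κ_r-linearly regular over B(P_C x^0, r) for some κ_r > 0, then {x^k} converges linearly to some point x^∞ ∈ C: ‖x^k − x^∞‖ ≤ c_r q_r^k for all k, where q_r := (1 − (ω⁻(2−α⁺)(α⁻)²/(s α⁺)) · (δ_r/(κ_r Δ_r))²)^{1/(2s)} and c_r := 2 d(x^0, C)/q_r^{s−1}. -/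
open Filter Function Metric Bornology RealInnerProductSpace Topology

set_option maxHeartbeats 4000000

/-- Linear convergence of the double-layer fixed point algorithm under
the argmax inner-outer control condition, two-sided proximity bounds and bounded
linear regularity of the family of fixed point sets. -/
theorem doubleLayer_linear_convergence
    {H : Type*} [NormedAddCommGroup H] [InnerProductSpace ℝ H] [CompleteSpace H]
    {m : ℕ} [NeZero m]
    (U : Fin m → H → H) (p : Fin m → H → ℝ)
    (hcutter : ∀ i, ∀ x : H, ∀ z ∈ fixedPoints (U i), ⟪x - U i x, z - U i x⟫ ≤ 0)
    (hpnonneg : ∀ i, ∀ x : H, 0 ≤ p i x)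
    (hpfix : ∀ i, fixedPoints (U i) = {x : H | p i x = 0})
    (hC : (⋂ i, fixedPoints (U i)).Nonempty)
    (x : ℕ → H) (Ik Jk : ℕ → Finset (Fin m)) (α : ℕ → ℝ) (ω : ℕ → Fin m → ℝ)
    (hIkne : ∀ k, (Ik k).Nonempty) (hIJ : ∀ k, Ik k ⊆ Jk k)
    (αminus αplus ωminus : ℝ)
    (hαminus : αminus ∈ Set.Ioc (0 : ℝ) 1) (hαplus : αplus ∈ Set.Ico (1 : ℝ) 2)
    (hωminus : ωminus ∈ Set.Ioc (0 : ℝ) 1)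
    (hα : ∀ k, α k ∈ Set.Icc αminus αplus)
    (hω : ∀ k, ∀ i ∈ Ik k, ω k i ∈ Set.Icc ωminus 1)
    (hωsum : ∀ k, ∑ i ∈ Ik k, ω k i = 1)
    (hrec : ∀ k, x (k + 1) = x k + α k • ((∑ i ∈ Ik k, ω k i • U i (x k)) - x k))
    (s : ℕ) (hs : 1 ≤ s)
    (hcover : ∀ k, ∀ i : Fin m, ∃ l < s, i ∈ Jk (k + l))
    (hiii : ∀ k, ∃ i ∈ Ik k, ∀ j ∈ Jk k, p j (x k) ≤ p i (x k))
    (hr : 0 < infDist (x 0) (⋂ i, fixedPoints (U i)))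
    (x0p : H) (hx0p : x0p ∈ ⋂ i, fixedPoints (U i))
    (hx0pproj : ‖x 0 - x0p‖ = infDist (x 0) (⋂ i, fixedPoints (U i)))
    (δ Δ : ℝ) (hδ : 0 < δ) (hΔ : 0 < Δ)
    (hbound : ∀ y ∈ closedBall x0p (infDist (x 0) (⋂ i, fixedPoints (U i))), ∀ i,
      δ * infDist y (fixedPoints (U i)) ≤ p i y ∧ p i y ≤ Δ * ‖U i y - y‖)
    (κ : ℝ) (hκ : 0 < κ)
    (hlinreg : ∀ y ∈ closedBall x0p (infDist (x 0) (⋂ i, fixedPoints (U i))),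
      infDist y (⋂ i, fixedPoints (U i)) ≤
        κ * Finset.univ.sup' Finset.univ_nonempty fun i =>
          infDist y (fixedPoints (U i))) :
    ∃ xinf ∈ ⋂ i, fixedPoints (U i), ∀ k : ℕ,
      ‖x k - xinf‖ ≤
        2 * infDist (x 0) (⋂ i, fixedPoints (U i)) /
            ((1 - ωminus * (2 - αplus) * αminus ^ 2 / ((s : ℝ) * αplus) *
                (δ / (κ * Δ)) ^ 2) ^ ((1 : ℝ) / (2 * (s : ℝ)))) ^ (s - 1) *
          ((1 - ωminus * (2 - αplus) * αminus ^ 2 / ((s : ℝ) * αplus) *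
              (δ / (κ * Δ)) ^ 2) ^ ((1 : ℝ) / (2 * (s : ℝ)))) ^ k := by
  obtain ⟨hαm0, hαm1⟩ := hαminus
  obtain ⟨hαp1, hαp2⟩ := hαplus
  obtain ⟨hωm0, hωm1⟩ := hωminus
  set C : Set H := ⋂ i, fixedPoints (U i) with hCdef
  set r : ℝ := infDist (x 0) C with hrdef
  set θ : ℝ := ωminus * (2 - αplus) * αminus ^ 2 / ((s : ℝ) * αplus) * (δ / (κ * Δ)) ^ 2
    with hθdef
  set q : ℝ := (1 - θ) ^ ((1 : ℝ) / (2 * (s : ℝ))) with hqdef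
  have hsR : (1 : ℝ) ≤ (s : ℝ) := by exact_mod_cast hs
  have hα0 : ∀ k, 0 < α k := fun k => hαm0.trans_le (hα k).1
  have hα2 : ∀ k, α k < 2 := fun k => (hα k).2.trans_lt hαp2
  have hω0 : ∀ k, ∀ i ∈ Ik k, 0 ≤ ω k i := fun k i hi => hωm0.le.trans (hω k i hi).1
  -- membership facts
  have hx0pfix : ∀ i, x0p ∈ fixedPoints (U i) := by
    intro i
    have h := hx0p
    rw [hCdef] at h
    exact Set.mem_iInter.mp h i
  have hCsub : ∀ i, C ⊆ fixedPoints (U i) := by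
    intro i
    rw [hCdef]
    exact Set.iInter_subset _ i
  have hfixne : ∀ i, (fixedPoints (U i)).Nonempty := fun i => ⟨x0p, hx0pfix i⟩
  -- quantities
  set Q : ℕ → ℝ := fun k => ∑ i ∈ Ik k, ω k i * ‖U i (x k) - x k‖ ^ 2 with hQdef
  set γ : ℕ → ℝ := fun k => α k * (2 - α k) * Q k with hγdef
  have hQ0 : ∀ k, 0 ≤ Q k := by
    intro k
    exact Finset.sum_nonneg fun i hi => mul_nonneg (hω0 k i hi) (sq_nonneg _)
  have hγ0 : ∀ k, 0 ≤ γ k := by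
    intro k
    have := hα0 k; have := hα2 k
    exact mul_nonneg (mul_nonneg (by linarith) (by linarith)) (hQ0 k)
  -- cutter inequality, pointwise
  have hcuti : ∀ i (y z : H), z ∈ fixedPoints (U i) →
      ‖U i y - y‖ ^ 2 ≤ ⟪U i y - y, z - y⟫ := by
    intro i y z hz
    have h := hcutter i y z hz
    have hsplit : z - U i y = (z - y) + (y - U i y) := by abel
    rw [hsplit, inner_add_right] at h
    have h2 : ⟪y - U i y, y - U i y⟫ = ‖U i y - y‖ ^ 2 := by
      rw [real_inner_self_eq_norm_sq, norm_sub_rev]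
    have h3 : ⟪U i y - y, z - y⟫ = -⟪y - U i y, z - y⟫ := by
      rw [show y - U i y = -(U i y - y) by abel, inner_neg_left]
      ring
    rw [h2] at h
    rw [h3]
    linarith
  -- the displacement vector identity
  have hv : ∀ k, (∑ i ∈ Ik k, ω k i • U i (x k)) - x k
      = ∑ i ∈ Ik k, ω k i • (U i (x k) - x k) := by
    intro k
    simp only [smul_sub, Finset.sum_sub_distrib, ← Finset.sum_smul, hωsum k, one_smul]
  -- norm of displacement bounded by Q
  have hvn : ∀ k, ‖∑ i ∈ Ik k, ω k i • (U i (x k) - x k)‖ ^ 2 ≤ Q k := by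
    intro k
    have h1 : ‖∑ i ∈ Ik k, ω k i • (U i (x k) - x k)‖
        ≤ ∑ i ∈ Ik k, ω k i * ‖U i (x k) - x k‖ := by
      refine (norm_sum_le _ _).trans (le_of_eq (Finset.sum_congr rfl fun i hi => ?_))
      rw [norm_smul, Real.norm_eq_abs, abs_of_nonneg (hω0 k i hi)]
    have hcs := Finset.sum_mul_sq_le_sq_mul_sq (Ik k) (fun i => Real.sqrt (ω k i))
      (fun i => Real.sqrt (ω k i) * ‖U i (x k) - x k‖)
    have e1 : ∑ i ∈ Ik k, Real.sqrt (ω k i) * (Real.sqrt (ω k i) * ‖U i (x k) - x k‖)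
        = ∑ i ∈ Ik k, ω k i * ‖U i (x k) - x k‖ := by
      refine Finset.sum_congr rfl fun i hi => ?_
      rw [← mul_assoc, Real.mul_self_sqrt (hω0 k i hi)]
    have e2 : ∑ i ∈ Ik k, Real.sqrt (ω k i) ^ 2 = 1 := by
      rw [Finset.sum_congr rfl fun i hi => Real.sq_sqrt (hω0 k i hi), hωsum k]
    have e3 : ∑ i ∈ Ik k, (Real.sqrt (ω k i) * ‖U i (x k) - x k‖) ^ 2 = Q k := by
      refine Finset.sum_congr rfl fun i hi => ?_
      rw [mul_pow, Real.sq_sqrt (hω0 k i hi)]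
    rw [e1, e2, e3, one_mul] at hcs
    calc ‖∑ i ∈ Ik k, ω k i • (U i (x k) - x k)‖ ^ 2
        ≤ (∑ i ∈ Ik k, ω k i * ‖U i (x k) - x k‖) ^ 2 := by
          have hnn : (0:ℝ) ≤ ‖∑ i ∈ Ik k, ω k i • (U i (x k) - x k)‖ := norm_nonneg _
          exact pow_le_pow_left₀ hnn h1 2
      _ ≤ Q k := hcs
  -- the step displacement
  have hstep : ∀ k, x (k + 1) - x k = α k • ∑ i ∈ Ik k, ω k i • (U i (x k) - x k) := by
    intro k
    rw [hrec k, hv k, add_sub_cancel_left]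
  have hvQ : ∀ k, ‖x (k + 1) - x k‖ ^ 2 ≤ α k ^ 2 * Q k := by
    intro k
    rw [hstep k, norm_smul, Real.norm_eq_abs, mul_pow, sq_abs]
    exact mul_le_mul_of_nonneg_left (hvn k) (sq_nonneg _)
  -- the key Fejér-type inequality
  have hAB : ∀ k, ∀ z ∈ C, ‖x (k + 1) - z‖ ^ 2 + γ k ≤ ‖x k - z‖ ^ 2 := by
    intro k z hz
    have hzfix : ∀ i, z ∈ fixedPoints (U i) := fun i => hCsub i hz
    set v : H := ∑ i ∈ Ik k, ω k i • (U i (x k) - x k) with hvdef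
    have hx1 : x (k + 1) - z = (x k - z) + α k • v := by
      rw [hrec k, hv k, add_sub_right_comm]
    have hQA : Q k ≤ ⟪v, z - x k⟫ := by
      rw [hvdef, sum_inner]
      refine Finset.sum_le_sum fun i hi => ?_
      rw [real_inner_smul_left]
      exact mul_le_mul_of_nonneg_left (hcuti i (x k) z (hzfix i)) (hω0 k i hi)
    have hvv : ‖v‖ ^ 2 ≤ Q k := hvn k
    have hexp : ‖x (k + 1) - z‖ ^ 2
        = ‖x k - z‖ ^ 2 + 2 * (α k * ⟪x k - z, v⟫) + α k ^ 2 * ‖v‖ ^ 2 := by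
      rw [hx1, norm_add_sq_real, real_inner_smul_right, norm_smul, Real.norm_eq_abs,
        mul_pow, sq_abs]
    have hsym : ⟪x k - z, v⟫ = -⟪v, z - x k⟫ := by
      rw [real_inner_comm, show x k - z = -(z - x k) by abel, inner_neg_right]
    have hαk := hα k
    have hαk0 := hα0 k
    have hαk2 := hα2 k
    have hQk := hQ0 k
    have hγk : γ k = α k * (2 - α k) * Q k := rfl
    rw [hexp, hsym, hγk]
    have e1 : α k ^ 2 * ‖v‖ ^ 2 ≤ α k ^ 2 * Q k :=
      mul_le_mul_of_nonneg_left hvv (sq_nonneg _)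
    have e2 : α k * Q k ≤ α k * ⟪v, z - x k⟫ := mul_le_mul_of_nonneg_left hQA hαk0.le
    nlinarith [e1, e2]
  -- Fejér monotonicity
  have hmono : ∀ z ∈ C, ∀ k j, k ≤ j → ‖x j - z‖ ≤ ‖x k - z‖ := by
    intro z hz k j hkj
    induction j, hkj using Nat.le_induction with
    | base => exact le_refl _
    | succ n hn ih =>
      have h := hAB n z hz
      have h2 := hγ0 n
      nlinarith [norm_nonneg (x (n + 1) - z), norm_nonneg (x n - z)]
  have hball : ∀ k, x k ∈ closedBall x0p r := by
    intro k
    rw [mem_closedBall, dist_eq_norm]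
    calc ‖x k - x0p‖ ≤ ‖x 0 - x0p‖ := hmono x0p hx0p 0 k (Nat.zero_le k)
      _ = r := hx0pproj
  -- telescoping
  have htel : ∀ z ∈ C, ∀ k n,
      ‖x (k + n) - z‖ ^ 2 + ∑ j ∈ Finset.range n, γ (k + j) ≤ ‖x k - z‖ ^ 2 := by
    intro z hz k n
    induction n with
    | zero => simp
    | succ n ih =>
      have h := hAB (k + n) z hz
      rw [Finset.sum_range_succ, ← add_assoc]
      have hx' : k + (n + 1) = (k + n) + 1 := by ring
      rw [hx']
      linarith
  -- monotonicity of distances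
  have hdmono : ∀ k j, k ≤ j → infDist (x j) C ≤ infDist (x k) C := by
    intro k j hkj
    refine le_of_forall_pos_le_add fun ε hε => ?_
    obtain ⟨z, hzC, hzd⟩ := (infDist_lt_iff hC).mp
      (lt_add_of_pos_right (infDist (x k) C) hε)
    calc infDist (x j) C ≤ dist (x j) z := infDist_le_dist_of_mem hzC
      _ = ‖x j - z‖ := dist_eq_norm _ _
      _ ≤ ‖x k - z‖ := hmono z hzC k j hkj
      _ = dist (x k) z := (dist_eq_norm _ _).symm
      _ ≤ infDist (x k) C + ε := hzd.le
  -- ‖U i y - y‖ ≤ infDist y (Fix U i)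
  have hUle : ∀ i (y : H), ‖U i y - y‖ ≤ infDist y (fixedPoints (U i)) := by
    intro i y
    refine le_of_forall_pos_le_add fun ε hε => ?_
    obtain ⟨z, hz, hzd⟩ := (infDist_lt_iff (hfixne i)).mp
      (lt_add_of_pos_right (infDist y (fixedPoints (U i))) hε)
    have h1 := hcuti i y z hz
    have h2 := real_inner_le_norm (U i y - y) (z - y)
    have h3 : ‖z - y‖ = dist y z := by rw [dist_eq_norm, norm_sub_rev]
    have hy : ‖U i y - y‖ ≤ dist y z := by
      rcases eq_or_lt_of_le (norm_nonneg (U i y - y)) with h0 | h0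
      · rw [← h0]; exact dist_nonneg
      · nlinarith
    calc ‖U i y - y‖ ≤ dist y z := hy
      _ ≤ infDist y (fixedPoints (U i)) + ε := hzd.le
  -- δ ≤ Δ and δ ≤ κ Δ
  have hδΔ : δ ≤ Δ ∧ δ ≤ κ * Δ := by
    obtain ⟨i0, -, hi0eq⟩ := Finset.exists_mem_eq_sup' (Finset.univ_nonempty (α := Fin m))
      (fun i => infDist (x 0) (fixedPoints (U i)))
    have hlin := hlinreg (x 0) (hball 0)
    rw [hi0eq] at hlin
    have hDpos : 0 < infDist (x 0) (fixedPoints (U i0)) := by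
      nlinarith [hr, hκ]
    have h1 := (hbound (x 0) (hball 0) i0).1
    have h2 := (hbound (x 0) (hball 0) i0).2
    have h3 := hUle i0 (x 0)
    have h4 : infDist (x 0) (fixedPoints (U i0)) ≤ r :=
      infDist_le_infDist_of_subset (hCsub i0) hC
    have h5 : δ * infDist (x 0) (fixedPoints (U i0)) ≤ Δ * infDist (x 0) (fixedPoints (U i0)) :=
      h1.trans (h2.trans (mul_le_mul_of_nonneg_left h3 hΔ.le))
    have hδΔ1 : δ ≤ Δ := le_of_mul_le_mul_right h5 hDpos
    refine ⟨hδΔ1, ?_⟩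
    have h6 : δ * r ≤ (κ * Δ) * r := by
      have e1 : δ * r ≤ δ * (κ * infDist (x 0) (fixedPoints (U i0))) :=
        mul_le_mul_of_nonneg_left hlin hδ.le
      have e2 : κ * (δ * infDist (x 0) (fixedPoints (U i0)))
          ≤ κ * (Δ * infDist (x 0) (fixedPoints (U i0))) :=
        mul_le_mul_of_nonneg_left h5 hκ.le
      have e3 : (κ * Δ) * infDist (x 0) (fixedPoints (U i0)) ≤ (κ * Δ) * r :=
        mul_le_mul_of_nonneg_left h4 (mul_pos hκ hΔ).le
      nlinarith [e1, e2, e3]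
    exact le_of_mul_le_mul_right h6 hr
  -- the block progress inequality
  have hblock : ∀ k, θ * infDist (x k) C ^ 2 ≤ ∑ j ∈ Finset.range s, γ (k + j) := by
    intro k
    obtain ⟨istar, -, hsupeq⟩ := Finset.exists_mem_eq_sup' (Finset.univ_nonempty (α := Fin m))
      (fun i => infDist (x k) (fixedPoints (U i)))
    have hlin := hlinreg (x k) (hball k)
    rw [hsupeq] at hlin
    obtain ⟨l, hls, hiJ⟩ := hcover k istar
    obtain ⟨i', hi'I, hi'max⟩ := hiii (k + l)
    set b : ℕ → ℝ := fun j => if j < l then δ * ‖x (k + j + 1) - x (k + j)‖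
      else Δ * ‖U i' (x (k + l)) - x (k + l)‖ with hbdef
    have hb0 : ∀ j, 0 ≤ b j := by
      intro j
      simp only [hbdef]
      split
      · positivity
      · positivity
    -- Step A : δ * d_k ≤ κ * ∑ b
    have hA3 : δ * infDist (x (k + l)) (fixedPoints (U istar)) ≤ b l := by
      simp only [hbdef, lt_irrefl, if_false]
      calc δ * infDist (x (k + l)) (fixedPoints (U istar))
          ≤ p istar (x (k + l)) := (hbound (x (k + l)) (hball (k + l)) istar).1
        _ ≤ p i' (x (k + l)) := hi'max istar hiJ
        _ ≤ Δ * ‖U i' (x (k + l)) - x (k + l)‖ := (hbound (x (k + l)) (hball (k + l)) i').2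
    have hA : δ * infDist (x k) C ≤ κ * ∑ j ∈ Finset.range (l + 1), b j := by
      have hA1 : infDist (x k) (fixedPoints (U istar))
          ≤ infDist (x (k + l)) (fixedPoints (U istar)) + dist (x k) (x (k + l)) :=
        infDist_le_infDist_add_dist
      have hA2 : dist (x k) (x (k + l))
          ≤ ∑ j ∈ Finset.range l, dist (x (k + j)) (x (k + j + 1)) := by
        exact dist_le_range_sum_dist (fun j => x (k + j)) l
      have h4 : δ * dist (x k) (x (k + l)) ≤ ∑ j ∈ Finset.range l, b j := by
        calc δ * dist (x k) (x (k + l))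
            ≤ δ * ∑ j ∈ Finset.range l, dist (x (k + j)) (x (k + j + 1)) :=
              mul_le_mul_of_nonneg_left hA2 hδ.le
          _ = ∑ j ∈ Finset.range l, δ * dist (x (k + j)) (x (k + j + 1)) := Finset.mul_sum _ _ _
          _ = ∑ j ∈ Finset.range l, b j := by
              refine Finset.sum_congr rfl fun j hj => ?_
              simp only [hbdef, if_pos (Finset.mem_range.mp hj)]
              rw [dist_eq_norm, norm_sub_rev]
      have h2 : δ * infDist (x k) (fixedPoints (U istar)) ≤ ∑ j ∈ Finset.range (l + 1), b j := by
        rw [Finset.sum_range_succ]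
        have h3 : δ * infDist (x k) (fixedPoints (U istar))
            ≤ δ * infDist (x (k + l)) (fixedPoints (U istar)) + δ * dist (x k) (x (k + l)) := by
          nlinarith [mul_le_mul_of_nonneg_left hA1 hδ.le]
        linarith
      calc δ * infDist (x k) C ≤ κ * (δ * infDist (x k) (fixedPoints (U istar))) := by
            nlinarith [mul_le_mul_of_nonneg_left hlin hδ.le]
        _ ≤ κ * ∑ j ∈ Finset.range (l + 1), b j := mul_le_mul_of_nonneg_left h2 hκ.le
    -- Step B : weighted square bounds
    have hB : ∀ j ∈ Finset.range (l + 1),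
        (ωminus * (2 - αplus) * αminus ^ 2) * b j ^ 2 ≤ (αplus * Δ ^ 2) * γ (k + j) := by
      intro j hj
      have hγj : γ (k + j) = α (k + j) * (2 - α (k + j)) * Q (k + j) := rfl
      have hαj1 := (hα (k + j)).1
      have hαj2 := (hα (k + j)).2
      have hαj0 := hα0 (k + j)
      have hαj22 := hα2 (k + j)
      have hQj := hQ0 (k + j)
      by_cases hjl : j < l
      · simp only [hbdef, if_pos hjl]
        have t1 := hvQ (k + j)
        have c1 : ωminus * αminus ^ 2 ≤ 1 := by nlinarith
        have u1 : ωminus * (2 - αplus) * αminus ^ 2 ≤ 2 - αplus := by nlinarith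
        have c4 : δ ^ 2 ≤ Δ ^ 2 := by nlinarith [hδΔ.1, hδ]
        have w1 : ωminus * (2 - αplus) * αminus ^ 2 * δ ^ 2 ≤ (2 - αplus) * Δ ^ 2 :=
          mul_le_mul u1 c4 (sq_nonneg δ) (by nlinarith)
        have w3 : (2 - αplus) * α (k + j) ≤ αplus * (2 - α (k + j)) := by nlinarith
        have w4 : ((2 - αplus) * Δ ^ 2) * (α (k + j) ^ 2)
            ≤ (αplus * Δ ^ 2) * (α (k + j) * (2 - α (k + j))) := by
          nlinarith [w3, mul_nonneg (sq_nonneg Δ) hαj0.le]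
        have step1 : (ωminus * (2 - αplus) * αminus ^ 2 * δ ^ 2) * ‖x (k + j + 1) - x (k + j)‖ ^ 2
            ≤ (ωminus * (2 - αplus) * αminus ^ 2 * δ ^ 2) * (α (k + j) ^ 2 * Q (k + j)) := by
          refine mul_le_mul_of_nonneg_left t1 ?_
          have : (0:ℝ) ≤ ωminus * (2 - αplus) * αminus ^ 2 :=
            mul_nonneg (mul_nonneg hωm0.le (by linarith)) (sq_nonneg _)
          positivity
        have step2 : (ωminus * (2 - αplus) * αminus ^ 2 * δ ^ 2) * (α (k + j) ^ 2)
            ≤ (αplus * Δ ^ 2) * (α (k + j) * (2 - α (k + j))) := by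
          calc (ωminus * (2 - αplus) * αminus ^ 2 * δ ^ 2) * (α (k + j) ^ 2)
              ≤ ((2 - αplus) * Δ ^ 2) * (α (k + j) ^ 2) :=
                mul_le_mul_of_nonneg_right w1 (sq_nonneg _)
            _ ≤ (αplus * Δ ^ 2) * (α (k + j) * (2 - α (k + j))) := w4
        have step3 := mul_le_mul_of_nonneg_right step2 hQj
        rw [hγj]
        nlinarith [step1, step3]
      · have hjl' : j = l := by
          have := Finset.mem_range.mp hj
          omega
        subst hjl'
        simp only [hbdef, lt_irrefl, if_false]
        have t1 : ωminus * ‖U i' (x (k + j)) - x (k + j)‖ ^ 2 ≤ Q (k + j) := by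
          have hsingle : ω (k + j) i' * ‖U i' (x (k + j)) - x (k + j)‖ ^ 2 ≤ Q (k + j) := by
            refine Finset.single_le_sum (f := fun i => ω (k + j) i * ‖U i (x (k + j)) - x (k + j)‖ ^ 2)
              (fun i hi => mul_nonneg (hω0 _ i hi) (sq_nonneg _)) hi'I
          have h5 : ωminus * ‖U i' (x (k + j)) - x (k + j)‖ ^ 2
              ≤ ω (k + j) i' * ‖U i' (x (k + j)) - x (k + j)‖ ^ 2 :=
            mul_le_mul_of_nonneg_right (hω (k + j) i' hi'I).1 (sq_nonneg _)
          linarith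
        have y1 : αminus * (2 - αplus) ≤ α (k + j) * (2 - α (k + j)) :=
          mul_le_mul hαj1 (by linarith) (by linarith) hαj0.le
        have y2 : (2 - αplus) * αminus ^ 2 ≤ αplus * (α (k + j) * (2 - α (k + j))) := by
          nlinarith [y1, mul_nonneg hαm0.le (show (0:ℝ) ≤ 2 - αplus by linarith)]
        have z1 : ((2 - αplus) * αminus ^ 2 * Δ ^ 2) * (ωminus * ‖U i' (x (k + j)) - x (k + j)‖ ^ 2)
            ≤ ((2 - αplus) * αminus ^ 2 * Δ ^ 2) * Q (k + j) := by
          refine mul_le_mul_of_nonneg_left t1 ?_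
          have h2α : (0:ℝ) ≤ 2 - αplus := by linarith
          positivity
        have z2 : ((2 - αplus) * αminus ^ 2) * (Δ ^ 2 * Q (k + j))
            ≤ (αplus * (α (k + j) * (2 - α (k + j)))) * (Δ ^ 2 * Q (k + j)) :=
          mul_le_mul_of_nonneg_right y2 (mul_nonneg (sq_nonneg Δ) hQj)
        rw [hγj]
        nlinarith [z1, z2]
    -- Step C : Cauchy–Schwarz and assembling
    have hCS : (∑ j ∈ Finset.range (l + 1), b j) ^ 2
        ≤ ((l:ℝ) + 1) * ∑ j ∈ Finset.range (l + 1), b j ^ 2 := by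
      have h := sq_sum_le_card_mul_sum_sq (s := Finset.range (l + 1)) (f := b)
      simpa using h
    have hsum2 : (ωminus * (2 - αplus) * αminus ^ 2) * ∑ j ∈ Finset.range (l + 1), b j ^ 2
        ≤ (αplus * Δ ^ 2) * ∑ j ∈ Finset.range (l + 1), γ (k + j) := by
      rw [Finset.mul_sum, Finset.mul_sum]
      exact Finset.sum_le_sum hB
    have hsub : ∑ j ∈ Finset.range (l + 1), γ (k + j) ≤ ∑ j ∈ Finset.range s, γ (k + j) :=
      Finset.sum_le_sum_of_subset_of_nonneg (Finset.range_subset_range.mpr (by omega))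
        (fun j _ _ => hγ0 (k + j))
    have hS0 : 0 ≤ ∑ j ∈ Finset.range (l + 1), b j ^ 2 :=
      Finset.sum_nonneg fun j _ => sq_nonneg _
    have hsq : (δ * infDist (x k) C) ^ 2 ≤ (κ * ∑ j ∈ Finset.range (l + 1), b j) ^ 2 := by
      refine pow_le_pow_left₀ (mul_nonneg hδ.le infDist_nonneg) hA 2
    have hl1s : ((l:ℝ) + 1) ≤ (s:ℝ) := by exact_mod_cast hls
    have f2 : δ ^ 2 * infDist (x k) C ^ 2
        ≤ κ ^ 2 * ((s:ℝ) * ∑ j ∈ Finset.range (l + 1), b j ^ 2) := by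
      have f1 : δ ^ 2 * infDist (x k) C ^ 2
          ≤ κ ^ 2 * (((l:ℝ) + 1) * ∑ j ∈ Finset.range (l + 1), b j ^ 2) := by
        nlinarith [hsq, mul_le_mul_of_nonneg_left hCS (sq_nonneg κ)]
      have f1' : κ ^ 2 * (((l:ℝ) + 1) * ∑ j ∈ Finset.range (l + 1), b j ^ 2)
          ≤ κ ^ 2 * ((s:ℝ) * ∑ j ∈ Finset.range (l + 1), b j ^ 2) := by
        refine mul_le_mul_of_nonneg_left ?_ (sq_nonneg κ)
        exact mul_le_mul_of_nonneg_right hl1s hS0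
      linarith
    have hPpos : 0 < ωminus * (2 - αplus) * αminus ^ 2 :=
      mul_pos (mul_pos hωm0 (by linarith)) (pow_pos hαm0 2)
    have f3 : (ωminus * (2 - αplus) * αminus ^ 2) * (δ ^ 2 * infDist (x k) C ^ 2)
        ≤ (ωminus * (2 - αplus) * αminus ^ 2) * (κ ^ 2 * ((s:ℝ) * ∑ j ∈ Finset.range (l + 1), b j ^ 2)) :=
      mul_le_mul_of_nonneg_left f2 hPpos.le
    have f4 : (ωminus * (2 - αplus) * αminus ^ 2) * ∑ j ∈ Finset.range (l + 1), b j ^ 2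
        ≤ (αplus * Δ ^ 2) * ∑ j ∈ Finset.range s, γ (k + j) := by
      have := mul_le_mul_of_nonneg_left hsub (by positivity : (0:ℝ) ≤ αplus * Δ ^ 2)
      linarith
    have f5 : (ωminus * (2 - αplus) * αminus ^ 2) * (δ ^ 2 * infDist (x k) C ^ 2)
        ≤ κ ^ 2 * (s:ℝ) * ((αplus * Δ ^ 2) * ∑ j ∈ Finset.range s, γ (k + j)) := by
      have f4' := mul_le_mul_of_nonneg_left f4
        (mul_nonneg (sq_nonneg κ) (by linarith : (0:ℝ) ≤ (s:ℝ)))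
      nlinarith [f3, f4']
    have hsne : (s:ℝ) ≠ 0 := by linarith
    have hαpne : αplus ≠ 0 := by linarith
    have hκne : κ ≠ 0 := ne_of_gt hκ
    have hΔne : Δ ≠ 0 := ne_of_gt hΔ
    have hθeq : θ * ((s:ℝ) * αplus * κ ^ 2 * Δ ^ 2)
        = (ωminus * (2 - αplus) * αminus ^ 2) * δ ^ 2 := by
      rw [hθdef]
      field_simp
    have hpos : 0 < (s:ℝ) * αplus * κ ^ 2 * Δ ^ 2 :=
      mul_pos (mul_pos (mul_pos (by linarith) (by linarith)) (pow_pos hκ 2)) (pow_pos hΔ 2)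
    have hfinal : θ * infDist (x k) C ^ 2 * ((s:ℝ) * αplus * κ ^ 2 * Δ ^ 2)
        ≤ (∑ j ∈ Finset.range s, γ (k + j)) * ((s:ℝ) * αplus * κ ^ 2 * Δ ^ 2) := by
      have e1 : θ * infDist (x k) C ^ 2 * ((s:ℝ) * αplus * κ ^ 2 * Δ ^ 2)
          = (ωminus * (2 - αplus) * αminus ^ 2) * (δ ^ 2 * infDist (x k) C ^ 2) := by
        calc θ * infDist (x k) C ^ 2 * ((s:ℝ) * αplus * κ ^ 2 * Δ ^ 2)
            = θ * ((s:ℝ) * αplus * κ ^ 2 * Δ ^ 2) * infDist (x k) C ^ 2 := by ring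
          _ = (ωminus * (2 - αplus) * αminus ^ 2) * δ ^ 2 * infDist (x k) C ^ 2 := by
              rw [hθeq]
          _ = (ωminus * (2 - αplus) * αminus ^ 2) * (δ ^ 2 * infDist (x k) C ^ 2) := by ring
      rw [e1]
      nlinarith [f5]
    exact le_of_mul_le_mul_right hfinal hpos
  -- contraction over a block
  have hcontr : ∀ k, infDist (x (k + s)) C ^ 2 ≤ (1 - θ) * infDist (x k) C ^ 2 := by
    intro k
    have hblock' := hblock k
    refine le_of_forall_pos_le_add fun ε hε => ?_
    set D : ℝ := infDist (x k) C with hDdef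
    have hD0 : 0 ≤ D := infDist_nonneg
    set η : ℝ := min 1 (ε / (2 * D + 1)) with hηdef
    have hη0 : 0 < η := lt_min one_pos (div_pos hε (by linarith))
    have hη1 : η ≤ 1 := min_le_left _ _
    have hη2 : η ≤ ε / (2 * D + 1) := min_le_right _ _
    obtain ⟨z, hzC, hzd⟩ := (infDist_lt_iff hC).mp (lt_add_of_pos_right D hη0)
    have ht := htel z hzC k s
    have hle : infDist (x (k + s)) C ^ 2 ≤ ‖x (k + s) - z‖ ^ 2 := by
      have := infDist_le_dist_of_mem hzC (x := x (k + s))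
      rw [dist_eq_norm] at this
      exact pow_le_pow_left₀ infDist_nonneg this 2
    have h2 : ‖x k - z‖ ^ 2 ≤ (D + η) ^ 2 := by
      have : ‖x k - z‖ ≤ D + η := by rw [← dist_eq_norm]; exact hzd.le
      exact pow_le_pow_left₀ (norm_nonneg _) this 2
    have hηε : η * (2 * D + η) ≤ ε := by
      have h5 : η * (2 * D + η) ≤ η * (2 * D + 1) :=
        mul_le_mul_of_nonneg_left (by linarith) hη0.le
      have h6 : η * (2 * D + 1) ≤ ε := by
        rw [← div_mul_cancel₀ ε (show (2 * D + 1) ≠ 0 by positivity)]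
        exact mul_le_mul_of_nonneg_right hη2 (by linarith)
      linarith
    nlinarith
  have hθ1 : θ ≤ 1 := by
    have h := hcontr 0
    have h2 : (0:ℝ) ≤ infDist (x (0 + s)) C ^ 2 := sq_nonneg _
    have h3 : 0 < r ^ 2 := by positivity
    nlinarith
  have hθpos : 0 < θ := by
    rw [hθdef]
    have h1 : 0 < ωminus * (2 - αplus) * αminus ^ 2 :=
      mul_pos (mul_pos hωm0 (by linarith)) (pow_pos hαm0 2)
    have h2 : 0 < (s : ℝ) * αplus := mul_pos (by linarith) (by linarith)
    have h3 : 0 < (δ / (κ * Δ)) ^ 2 := pow_pos (div_pos hδ (mul_pos hκ hΔ)) 2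
    exact mul_pos (div_pos h1 h2) h3
  have h1θ : 0 ≤ 1 - θ := by linarith
  have hq0 : 0 ≤ q := Real.rpow_nonneg h1θ _
  have hqpow : q ^ (2 * s) = 1 - θ := by
    rw [hqdef, ← Real.rpow_natCast ((1 - θ) ^ ((1 : ℝ) / (2 * (s : ℝ)))) (2 * s),
      ← Real.rpow_mul h1θ]
    have : (1 : ℝ) / (2 * (s : ℝ)) * ((2 * s : ℕ) : ℝ) = 1 := by
      push_cast
      field_simp
    rw [this, Real.rpow_one]
  have hq1 : q < 1 := by
    by_contra h
    push_neg at h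
    have h2 : (1:ℝ) ≤ q ^ (2 * s) := by
      calc (1:ℝ) = 1 ^ (2 * s) := (one_pow _).symm
        _ ≤ q ^ (2 * s) := pow_le_pow_left₀ zero_le_one h _
    rw [hqpow] at h2
    linarith
  have hcontr' : ∀ k, infDist (x (k + s)) C ≤ q ^ s * infDist (x k) C := by
    intro k
    have h := hcontr k
    have h1 : (q ^ s) ^ 2 = 1 - θ := by
      rw [← pow_mul, show s * 2 = 2 * s by ring, hqpow]
    have h2 : (0:ℝ) ≤ q ^ s * infDist (x k) C :=
      mul_nonneg (pow_nonneg hq0 s) infDist_nonneg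
    nlinarith [infDist_nonneg (x := x (k + s)) (s := C)]
  have hns : ∀ n, infDist (x (n * s)) C ≤ q ^ (n * s) * infDist (x 0) C := by
    intro n
    induction n with
    | zero => simp
    | succ n ih =>
      have h1 : (n + 1) * s = n * s + s := by ring
      rw [h1]
      calc infDist (x (n * s + s)) C ≤ q ^ s * infDist (x (n * s)) C := hcontr' (n * s)
        _ ≤ q ^ s * (q ^ (n * s) * infDist (x 0) C) :=
            mul_le_mul_of_nonneg_left ih (pow_nonneg hq0 s)
        _ = q ^ (n * s + s) * infDist (x 0) C := by rw [pow_add]; ring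
  have hdk2 : ∀ k, q ^ (s - 1) * infDist (x k) C ≤ q ^ k * infDist (x 0) C := by
    intro k
    have hk : k / s * s ≤ k := Nat.div_mul_le_self k s
    have h1 : infDist (x k) C ≤ infDist (x (k / s * s)) C := hdmono _ k hk
    have h2 := hns (k / s)
    have hexp : k ≤ k / s * s + (s - 1) := by
      have hlt : k % s ≤ s - 1 := Nat.le_pred_of_lt (Nat.mod_lt k (by omega))
      calc k = s * (k / s) + k % s := (Nat.div_add_mod k s).symm
        _ ≤ s * (k / s) + (s - 1) := Nat.add_le_add_left hlt _
        _ = k / s * s + (s - 1) := by rw [Nat.mul_comm]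
    have h3 : q ^ (k / s * s + (s - 1)) ≤ q ^ k := pow_le_pow_of_le_one hq0 hq1.le hexp
    calc q ^ (s - 1) * infDist (x k) C
        ≤ q ^ (s - 1) * (q ^ (k / s * s) * infDist (x 0) C) :=
          mul_le_mul_of_nonneg_left (h1.trans h2) (pow_nonneg hq0 _)
      _ = q ^ (k / s * s + (s - 1)) * infDist (x 0) C := by rw [pow_add]; ring
      _ ≤ q ^ k * infDist (x 0) C := mul_le_mul_of_nonneg_right h3 infDist_nonneg
  have hqs1 : 0 < q ^ (s - 1) := by
    rcases eq_or_lt_of_le hs with h1 | h1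
    · rw [← h1]
      norm_num
    · -- s ≥ 2, show q > 0
      have hs2 : (2:ℝ) ≤ (s:ℝ) := by exact_mod_cast h1
      have hA1 : ωminus * (2 - αplus) * αminus ^ 2 ≤ 1 := by
        have e1 : αminus ^ 2 ≤ 1 := by nlinarith
        have e2 : ωminus * (2 - αplus) ≤ 1 := by nlinarith
        nlinarith [e1, e2, sq_nonneg αminus, mul_nonneg hωm0.le (by linarith : (0:ℝ) ≤ 2 - αplus)]
      have hB1 : (δ / (κ * Δ)) ^ 2 ≤ 1 := by
        have hb : δ / (κ * Δ) ≤ 1 := (div_le_one (by positivity)).mpr hδΔ.2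
        nlinarith [div_nonneg hδ.le (mul_pos hκ hΔ).le]
      have hθhalf : θ ≤ 1 / 2 := by
        rw [hθdef]
        have hsα : 2 ≤ (s : ℝ) * αplus := by nlinarith
        have h4 : ωminus * (2 - αplus) * αminus ^ 2 / ((s : ℝ) * αplus) ≤ 1 / 2 := by
          rw [div_le_div_iff₀ (by linarith) (by norm_num)]
          nlinarith
        have h5 : 0 ≤ ωminus * (2 - αplus) * αminus ^ 2 / ((s : ℝ) * αplus) := by
          exact div_nonneg (mul_nonneg (mul_nonneg hωm0.le (by linarith)) (sq_nonneg _))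
            (by linarith)
        nlinarith [pow_nonneg (div_nonneg hδ.le (mul_pos hκ hΔ).le) 2]
      have hqpos : 0 < q := Real.rpow_pos_of_pos (by linarith) _
      exact pow_pos hqpos _
  -- remaining distance to the limit: ‖x j - x k‖ ≤ 2 d_k for j ≥ k
  have h2dk : ∀ k j, k ≤ j → dist (x j) (x k) ≤ 2 * infDist (x k) C := by
    intro k j hkj
    refine le_of_forall_pos_le_add fun ε hε => ?_
    obtain ⟨z, hzC, hzd⟩ := (infDist_lt_iff hC).mp
      (lt_add_of_pos_right (infDist (x k) C) (half_pos hε))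
    have h1 : dist (x j) z ≤ dist (x k) z := by
      rw [dist_eq_norm, dist_eq_norm]
      exact hmono z hzC k j hkj
    calc dist (x j) (x k) ≤ dist (x j) z + dist z (x k) := dist_triangle _ _ _
      _ = dist (x j) z + dist (x k) z := by rw [dist_comm z (x k)]
      _ ≤ dist (x k) z + dist (x k) z := by linarith
      _ ≤ 2 * infDist (x k) C + ε := by linarith
  have hdto0 : Tendsto (fun k => infDist (x k) C) atTop (𝓝 0) := by
    have hupper : ∀ k, infDist (x k) C ≤ q ^ k * (infDist (x 0) C / q ^ (s - 1)) := by
      intro k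
      rw [mul_div_assoc' (q ^ k), le_div_iff₀ hqs1]
      calc infDist (x k) C * q ^ (s - 1) = q ^ (s - 1) * infDist (x k) C := by ring
        _ ≤ q ^ k * infDist (x 0) C := hdk2 k
    have hgto0 : Tendsto (fun k => q ^ k * (infDist (x 0) C / q ^ (s - 1))) atTop (𝓝 0) := by
      have := (tendsto_pow_atTop_nhds_zero_of_lt_one hq0 hq1).mul_const
        (infDist (x 0) C / q ^ (s - 1))
      rwa [zero_mul] at this
    exact squeeze_zero (fun k => infDist_nonneg) hupper hgto0
  have hcauchy : CauchySeq x := by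
    refine cauchySeq_of_le_tendsto_0 (fun N => 4 * infDist (x N) C) ?_ ?_
    · intro n mm N hn hm
      calc dist (x n) (x mm) ≤ dist (x n) (x N) + dist (x N) (x mm) := dist_triangle _ _ _
        _ = dist (x n) (x N) + dist (x mm) (x N) := by rw [dist_comm (x N)]
        _ ≤ 2 * infDist (x N) C + 2 * infDist (x N) C := by
            linarith [h2dk N n hn, h2dk N mm hm]
        _ = 4 * infDist (x N) C := by ring
    · have := hdto0.const_mul (4:ℝ)
      rwa [mul_zero] at this
  obtain ⟨xinf, hxinf⟩ := cauchySeq_tendsto_of_complete hcauchy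
  have hCclosed : IsClosed C := by
    rw [hCdef]
    refine isClosed_iInter fun i => ?_
    have heq : fixedPoints (U i) = ⋂ y : H, {z : H | ⟪y - U i y, z - U i y⟫ ≤ 0} := by
      ext z
      constructor
      · intro hz
        exact Set.mem_iInter.mpr fun y => hcutter i y z hz
      · intro hz
        have h1 := Set.mem_iInter.mp hz z
        have h2 : ‖z - U i z‖ ^ 2 ≤ 0 := by
          rw [← real_inner_self_eq_norm_sq]
          exact h1
        have h3 : z - U i z = 0 := by
          have := sq_nonneg ‖z - U i z‖
          have hn : ‖z - U i z‖ ^ 2 = 0 := le_antisymm h2 this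
          have : ‖z - U i z‖ = 0 := by nlinarith [norm_nonneg (z - U i z)]
          exact norm_eq_zero.mp this
        have : U i z = z := by
          have := sub_eq_zero.mp h3
          exact this.symm
        exact this
    rw [heq]
    refine isClosed_iInter fun y => ?_
    exact isClosed_le (Continuous.inner continuous_const
      (continuous_id.sub continuous_const)) continuous_const
  have hxinfC : xinf ∈ C := by
    have h1 : Tendsto (fun k => infDist (x k) C) atTop (𝓝 (infDist xinf C)) :=
      ((continuous_infDist_pt C).tendsto xinf).comp hxinf
    have h2 := tendsto_nhds_unique h1 hdto0
    exact (hCclosed.mem_iff_infDist_zero hC).mpr h2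
  have hfin : ∀ k, ‖x k - xinf‖ ≤ 2 * infDist (x k) C := by
    intro k
    have h1 : Tendsto (fun j => dist (x j) (x k)) atTop (𝓝 (dist xinf (x k))) :=
      (Continuous.dist continuous_id continuous_const).continuousAt.tendsto.comp hxinf
    have h2 : dist xinf (x k) ≤ 2 * infDist (x k) C :=
      le_of_tendsto h1 (eventually_atTop.mpr ⟨k, fun j hj => h2dk k j hj⟩)
    rw [← dist_eq_norm, dist_comm]
    exact h2
  refine ⟨xinf, hxinfC, fun k => ?_⟩
  have h2 := hdk2 k
  have h3 : infDist (x k) C ≤ q ^ k * r / q ^ (s - 1) := by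
    rw [le_div_iff₀ hqs1]
    calc infDist (x k) C * q ^ (s - 1) = q ^ (s - 1) * infDist (x k) C := by ring
      _ ≤ q ^ k * infDist (x 0) C := h2
      _ = q ^ k * r := rfl
  calc ‖x k - xinf‖ ≤ 2 * infDist (x k) C := hfin k
    _ ≤ 2 * (q ^ k * r / q ^ (s - 1)) := by linarith
    _ = 2 * r / q ^ (s - 1) * q ^ k := by ring
end
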